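/- Key renamings are natural with respect to SFMTT substitutions: given lock telescopes Λ, Θ : LockTele(n;m), a 2-cell α : locks(Λ) ⇒ locks(Θ), an SFMTT substitution σ : Γ̂ ⇒ Δ̂ at mode m, and an SFMTT expression t in scope Δ̂,Λ at mode n, we have (t[🔑^α(Λ⇒Θ)@Δ̂])[σ,Θ] = (t[σ,Λ])[🔑^α(Λ⇒Θ)@Γ̂]. -/

import Mathlib

set_option autoImplicit false

/-- A mode theory: a strict 2-category of modes, modalities and 2-cells. -/
structure ModeTheory : Type 1 where
  Mode : Type
  Hom : Mode → Mode → Type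
  id : (m : Mode) → Hom m m
  comp : {m n o : Mode} → Hom m n → Hom n o → Hom m o
  id_comp : ∀ {m n : Mode} (μ : Hom m n), comp (id m) μ = μ
  comp_id : ∀ {m n : Mode} (μ : Hom m n), comp μ (id n) = μ
  comp_assoc : ∀ {m n o p : Mode} (μ : Hom m n) (ν : Hom n o) (ρ : Hom o p),
    comp (comp μ ν) ρ = comp μ (comp ν ρ)
  Cell : {m n : Mode} → Hom m n → Hom m n → Type
  cid : {m n : Mode} → (μ : Hom m n) → Cell μ μ
  vcomp : {m n : Mode} → {μ ν ρ : Hom m n} → Cell μ ν → Cell ν ρ → Cell μ ρ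
  hcomp : {m n o : Mode} → {μ μ' : Hom m n} → {ν ν' : Hom n o} →
    Cell μ μ' → Cell ν ν' → Cell (comp μ ν) (comp μ' ν')
  cid_vcomp : ∀ {m n : Mode} {μ ν : Hom m n} (α : Cell μ ν), vcomp (cid μ) α = α
  vcomp_cid : ∀ {m n : Mode} {μ ν : Hom m n} (α : Cell μ ν), vcomp α (cid ν) = α
  vcomp_assoc : ∀ {m n : Mode} {μ₁ μ₂ μ₃ μ₄ : Hom m n}
    (α : Cell μ₁ μ₂) (β : Cell μ₂ μ₃) (γ : Cell μ₃ μ₄),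
    vcomp (vcomp α β) γ = vcomp α (vcomp β γ)
  hcomp_cid : ∀ {m n o : Mode} (μ : Hom m n) (ν : Hom n o),
    hcomp (cid μ) (cid ν) = cid (comp μ ν)
  interchange : ∀ {m n o : Mode} {μ₁ μ₂ μ₃ : Hom m n} {ν₁ ν₂ ν₃ : Hom n o}
    (α : Cell μ₁ μ₂) (β : Cell μ₂ μ₃) (γ : Cell ν₁ ν₂) (δ : Cell ν₂ ν₃),
    hcomp (vcomp α β) (vcomp γ δ) = vcomp (hcomp α γ) (hcomp β δ)
  id_hcomp : ∀ {m n : Mode} {μ ν : Hom m n} (α : Cell μ ν),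
    HEq (hcomp (cid (id m)) α) α
  hcomp_id : ∀ {m n : Mode} {μ ν : Hom m n} (α : Cell μ ν),
    HEq (hcomp α (cid (id n))) α
  hcomp_assoc : ∀ {m n o p : Mode} {μ μ' : Hom m n} {ν ν' : Hom n o} {ρ ρ' : Hom o p}
    (α : Cell μ μ') (β : Cell ν ν') (γ : Cell ρ ρ'),
    HEq (hcomp (hcomp α β) γ) (hcomp α (hcomp β γ))

namespace MTT

def castCell (M : ModeTheory) {m n : M.Mode} {μ μ' ν ν' : M.Hom m n}
    (h1 : μ = μ') (h2 : ν = ν') (α : M.Cell μ ν) : M.Cell μ' ν' := h1 ▸ h2 ▸ α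

/-- Scoping contexts at a mode. -/
inductive SCtx (M : ModeTheory) : M.Mode → Type where
  | empty {m : M.Mode} : SCtx M m
  | lock {m n : M.Mode} (Γ : SCtx M n) (μ : M.Hom m n) : SCtx M m
  | ext {m n : M.Mode} (Γ : SCtx M n) (μ : M.Hom m n) : SCtx M n

/-- Lock telescopes from inner mode `m` to outer mode `n`
(`cons` adds the outermost lock). -/
inductive LockTele (M : ModeTheory) : M.Mode → M.Mode → Type where
  | nil {m : M.Mode} : LockTele M m m
  | cons {m n k : M.Mode} (ρ : M.Hom k n) (Θ : LockTele M m k) : LockTele M m n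

variable (M : ModeTheory)

/-- Composite modality of a lock telescope. -/
def locks {m : M.Mode} : ∀ {n : M.Mode}, LockTele M m n → M.Hom m n
  | _, .nil => M.id _
  | _, .cons ρ Θ => M.comp (locks Θ) ρ

/-- Appending a lock telescope to a scoping context. -/
def appendL {m : M.Mode} : ∀ {n : M.Mode}, LockTele M m n → SCtx M n → SCtx M m
  | _, .nil, Γ => Γ
  | _, .cons ρ Θ, Γ => appendL Θ (SCtx.lock Γ ρ)

/-- Concatenation of lock telescopes (`appendLT Θ Λ` has `Λ` outermost、`Θ` innermost). -/
def appendLT {m k : M.Mode} (Θ : LockTele M m k) : ∀ {n : M.Mode},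
    LockTele M k n → LockTele M m n
  | _, .nil => Θ
  | _, .cons ρ Λ => .cons ρ (appendLT Θ Λ)

/-- `Γ ,, Θ` : appending a lock telescope to a scoping context. -/
abbrev appL {m n : M.Mode} (Γ : SCtx M n) (Θ : LockTele M m n) : SCtx M m :=
  appendL M Θ Γ

/-- `Λ ++ Θ` : concatenation of lock telescopes, `Λ` outermost. -/
abbrev appLT {m n k : M.Mode} (Λ : LockTele M k n) (Θ : LockTele M m k) :
    LockTele M m n := appendLT M Θ Λ

theorem appLT_nil {m n : M.Mode} (Λ : LockTele M m n) : appLT M Λ .nil = Λ := by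
  induction Λ with
  | nil => rfl
  | cons ρ Λ ih => show LockTele.cons ρ (appLT M Λ .nil) = _; rw [ih]

theorem locks_append {m n k : M.Mode} (Λ : LockTele M k n) (Θ : LockTele M m k) :
    locks M (appLT M Λ Θ) = M.comp (locks M Θ) (locks M Λ) := by
  induction Λ with
  | nil => show locks M Θ = M.comp (locks M Θ) (M.id _); rw [M.comp_id]
  | cons ρ Λ ih =>
      show M.comp (locks M (appLT M Λ Θ)) ρ = _
      rw [ih, M.comp_assoc]; rfl

theorem appL_append {m n k : M.Mode} (Γ : SCtx M n) (Λ : LockTele M k n)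
    (Θ : LockTele M m k) : appL M (appL M Γ Λ) Θ = appL M Γ (appLT M Λ Θ) := by
  induction Λ with
  | nil => rfl
  | cons ρ Λ ih => exact ih (SCtx.lock Γ ρ)

theorem locks_cons_nil {m n : M.Mode} (μ : M.Hom m n) :
    locks M (LockTele.cons μ LockTele.nil) = μ := by
  show M.comp (M.id m) μ = μ; exact M.id_comp μ

/-- Variables of the scoping context `Γ ,, Θ`. -/
def VarIn {m : M.Mode} : ∀ {n : M.Mode}, SCtx M n → LockTele M m n → Type
  | _, .empty, _ => PEmpty
  | _, .lock Γ ρ, Θ => VarIn Γ (.cons ρ Θ)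
  | _, @SCtx.ext _ k _ Γ μ, Θ =>
      (Σ' (h : k = m), M.Cell (h ▸ μ) (locks M Θ)) ⊕ VarIn Γ Θ

/-- The zero variable `v0^α`. -/
def VarIn.vz {n m : M.Mode} {Γ : SCtx M n} {μ : M.Hom m n} {Θ : LockTele M m n}
    (α : M.Cell μ (locks M Θ)) : VarIn M (SCtx.ext Γ μ) Θ := Sum.inl ⟨rfl, α⟩

/-- The successor variable `suc v`. -/
def VarIn.sucv {n m k : M.Mode} {Γ : SCtx M n} {μ : M.Hom k n} {Θ : LockTele M m n}
    (v : VarIn M Γ Θ) : VarIn M (SCtx.ext Γ μ) Θ := Sum.inr v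

theorem varIn_append {m k : M.Mode} (Λ : LockTele M m k) :
    ∀ {n : M.Mode} (Γ : SCtx M n) (Θ : LockTele M k n),
      VarIn M (appL M Γ Θ) Λ = VarIn M Γ (appLT M Θ Λ)
  | _, Γ, .nil => rfl
  | _, Γ, .cons ρ Θ => varIn_append Λ (SCtx.lock Γ ρ) Θ


/-- Substitution-free (SFMTT) expressions over a scoping context. -/
inductive Expr (M : ModeTheory) : ∀ {m : M.Mode}, SCtx M m → Type where
  | var {m : M.Mode} {Γ : SCtx M m} (v : VarIn M Γ LockTele.nil) : Expr M Γ
  | bool {m : M.Mode} {Γ : SCtx M m} : Expr M Γ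
  | tt {m : M.Mode} {Γ : SCtx M m} : Expr M Γ
  | ff {m : M.Mode} {Γ : SCtx M m} : Expr M Γ
  | ifte {m : M.Mode} {Γ : SCtx M m} (A : Expr M (SCtx.ext Γ (M.id m)))
      (s t t' : Expr M Γ) : Expr M Γ
  | arrow {m n : M.Mode} {Γ : SCtx M n} (μ : M.Hom m n)
      (A : Expr M (SCtx.lock Γ μ)) (B : Expr M (SCtx.ext Γ μ)) : Expr M Γ
  | lam {m n : M.Mode} {Γ : SCtx M n} (μ : M.Hom m n)
      (t : Expr M (SCtx.ext Γ μ)) : Expr M Γ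
  | app {m n : M.Mode} {Γ : SCtx M n} (μ : M.Hom m n)
      (f : Expr M Γ) (t : Expr M (SCtx.lock Γ μ)) : Expr M Γ
  | modTy {m n : M.Mode} {Γ : SCtx M n} (μ : M.Hom m n)
      (A : Expr M (SCtx.lock Γ μ)) : Expr M Γ
  | modTm {m n : M.Mode} {Γ : SCtx M n} (μ : M.Hom m n)
      (t : Expr M (SCtx.lock Γ μ)) : Expr M Γ
  | letmod {m n o : M.Mode} {Γ : SCtx M o} (μ : M.Hom m n) (ν : M.Hom n o)
      (A : Expr M (SCtx.lock (SCtx.lock Γ ν) μ)) (B : Expr M (SCtx.ext Γ ν))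
      (t : Expr M (SCtx.lock Γ ν)) (s : Expr M (SCtx.ext Γ (M.comp μ ν))) : Expr M Γ

/-- Atomic SFMTT renamings. -/
inductive ARen (M : ModeTheory) : ∀ {m : M.Mode}, SCtx M m → SCtx M m → Type where
  | done {m : M.Mode} {Γ : SCtx M m} : ARen M Γ SCtx.empty
  | id {m : M.Mode} {Γ : SCtx M m} : ARen M Γ Γ
  | wk {m k : M.Mode} {Γ Δ : SCtx M m} (σ : ARen M Γ Δ) (μ : M.Hom k m) :
      ARen M (SCtx.ext Γ μ) Δ
  | lock {m n : M.Mode} {Γ Δ : SCtx M n} (σ : ARen M Γ Δ) (μ : M.Hom m n) :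
      ARen M (SCtx.lock Γ μ) (SCtx.lock Δ μ)
  | key {m n : M.Mode} (Γ : SCtx M m) (Θ Ψ : LockTele M n m)
      (α : M.Cell (locks M Θ) (locks M Ψ)) : ARen M (appL M Γ Ψ) (appL M Γ Θ)
  | ext {m n : M.Mode} {Γ Δ : SCtx M n} (σ : ARen M Γ Δ) {μ : M.Hom m n}
      (v : VarIn M Γ (LockTele.cons μ LockTele.nil)) : ARen M Γ (SCtx.ext Δ μ)

/-- Atomic SFMTT substitutions. -/
inductive ASub (M : ModeTheory) : ∀ {m : M.Mode}, SCtx M m → SCtx M m → Type where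
  | done {m : M.Mode} {Γ : SCtx M m} : ASub M Γ SCtx.empty
  | id {m : M.Mode} {Γ : SCtx M m} : ASub M Γ Γ
  | wk {m k : M.Mode} {Γ Δ : SCtx M m} (σ : ASub M Γ Δ) (μ : M.Hom k m) :
      ASub M (SCtx.ext Γ μ) Δ
  | lock {m n : M.Mode} {Γ Δ : SCtx M n} (σ : ASub M Γ Δ) (μ : M.Hom m n) :
      ASub M (SCtx.lock Γ μ) (SCtx.lock Δ μ)
  | key {m n : M.Mode} (Γ : SCtx M m) (Θ Ψ : LockTele M n m)
      (α : M.Cell (locks M Θ) (locks M Ψ)) : ASub M (appL M Γ Ψ) (appL M Γ Θ)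
  | ext {m n : M.Mode} {Γ Δ : SCtx M n} (σ : ASub M Γ Δ) {μ : M.Hom m n}
      (t : Expr M (SCtx.lock Γ μ)) : ASub M Γ (SCtx.ext Δ μ)

/-- Action of a 2-cell between lock telescopes on variables. -/
def transf {n k : M.Mode} {Θ Ψ : LockTele M n k}
    (γ : M.Cell (locks M Θ) (locks M Ψ)) :
    ∀ {l : M.Mode} (Γ : SCtx M l) (Λ : LockTele M k l),
      VarIn M Γ (appLT M Λ Θ) → VarIn M Γ (appLT M Λ Ψ)
  | _, .empty, _, v => PEmpty.elim v
  | _, .lock Γ ρ, Λ, v => transf γ Γ (.cons ρ Λ) v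
  | _, .ext Γ μ, Λ, v =>
      match v with
      | Sum.inl ⟨h, β⟩ =>
          Sum.inl ⟨h, M.vcomp β (castCell M (locks_append M Λ Θ).symm
            (locks_append M Λ Ψ).symm (M.hcomp γ (M.cid (locks M Λ))))⟩
      | Sum.inr w => Sum.inr (transf γ Γ Λ w)


/-- The zero variable used in liftings, annotated with an identity 2-cell. -/
def vzeroLift {m n : M.Mode} {Γ : SCtx M n} (μ : M.Hom m n) :
    VarIn M (SCtx.ext Γ μ) (LockTele.cons μ LockTele.nil) :=
  Sum.inl ⟨rfl, castCell M rfl (locks_cons_nil M μ).symm (M.cid μ)⟩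

/-- Action of an atomic renaming under a lock telescope on a variable. -/
def arenVar : ∀ {m : M.Mode} {Γ Δ : SCtx M m}, ARen M Γ Δ →
    ∀ {n : M.Mode} (Λ : LockTele M n m), VarIn M Δ Λ → VarIn M Γ Λ
  | _, _, _, .id, _, _, v => v
  | _, _, _, .done, _, _, v => PEmpty.elim v
  | _, _, _, .wk σ _, _, Λ, v => Sum.inr (arenVar σ Λ v)
  | _, _, _, .lock σ μ, _, Λ, v => arenVar σ (.cons μ Λ) v
  | _, _, _, .key Γ₀ Θ Ψ α, _, Λ, v =>
      cast (varIn_append M Λ Γ₀ Ψ).symm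
        (transf M (castCell M (locks_append M Θ Λ).symm (locks_append M Ψ Λ).symm
            (M.hcomp (M.cid (locks M Λ)) α)) Γ₀ LockTele.nil
          (cast (varIn_append M Λ Γ₀ Θ) v))
  | _, _, _, .ext σ w, _, Λ, v =>
      match v with
      | Sum.inl ⟨h, β⟩ =>
          (by cases h; exact
            transf M (castCell M (locks_cons_nil M _).symm rfl β) _ LockTele.nil w)
      | Sum.inr v' => arenVar σ Λ v'

/-- The weakening atomic renaming `π`. -/
def piA {m k : M.Mode} {Γ : SCtx M m} (μ : M.Hom k m) : ARen M (SCtx.ext Γ μ) Γ :=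
  ARen.wk ARen.id μ

/-- Lifting of an atomic renaming. -/
def liftA {m k : M.Mode} {Γ Δ : SCtx M m} (σ : ARen M Γ Δ) (μ : M.Hom k m) :
    ARen M (SCtx.ext Γ μ) (SCtx.ext Δ μ) :=
  ARen.ext (ARen.wk σ μ) (vzeroLift M μ)

/-- Locking an atomic renaming by all locks of a lock telescope. -/
def lockTeleA {m : M.Mode} {Γ Δ : SCtx M m} (σ : ARen M Γ Δ) :
    ∀ {n : M.Mode} (Λ : LockTele M n m), ARen M (appL M Γ Λ) (appL M Δ Λ)
  | _, .nil => σ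
  | _, .cons ρ Λ => lockTeleA (ARen.lock σ ρ) Λ

/-- Action of an atomic renaming on an SFMTT expression. -/
def arenExpr : ∀ {m : M.Mode} {Δ : SCtx M m}, Expr M Δ →
    ∀ {Γ : SCtx M m}, ARen M Γ Δ → Expr M Γ
  | _, _, .var v, _, σ => .var (arenVar M σ LockTele.nil v)
  | _, _, .bool, _, _ => .bool
  | _, _, .tt, _, _ => .tt
  | _, _, .ff, _, _ => .ff
  | _, _, .ifte A s t t', _, σ =>
      .ifte (arenExpr A (liftA M σ (M.id _))) (arenExpr s σ) (arenExpr t σ) (arenExpr t' σ)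
  | _, _, .arrow μ A B, _, σ =>
      .arrow μ (arenExpr A (ARen.lock σ μ)) (arenExpr B (liftA M σ μ))
  | _, _, .lam μ t, _, σ => .lam μ (arenExpr t (liftA M σ μ))
  | _, _, .app μ f t, _, σ => .app μ (arenExpr f σ) (arenExpr t (ARen.lock σ μ))
  | _, _, .modTy μ A, _, σ => .modTy μ (arenExpr A (ARen.lock σ μ))
  | _, _, .modTm μ t, _, σ => .modTm μ (arenExpr t (ARen.lock σ μ))
  | _, _, .letmod μ ν A B t s, _, σ =>
      .letmod μ ν (arenExpr A (ARen.lock (ARen.lock σ ν) μ)) (arenExpr B (liftA M σ ν))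
        (arenExpr t (ARen.lock σ ν)) (arenExpr s (liftA M σ (M.comp μ ν)))


/-- View a variable of `Γ ,, Λ` as a variable of the full context. -/
def toVarNil {n m : M.Mode} {Γ : SCtx M n} {Λ : LockTele M m n}
    (v : VarIn M Γ Λ) : VarIn M (appL M Γ Λ) LockTele.nil :=
  cast (by rw [varIn_append, appLT_nil]) v

/-- View a variable of `Γ ,, Λ` as an expression. -/
def varExpr {n m : M.Mode} {Γ : SCtx M n} {Λ : LockTele M m n}
    (v : VarIn M Γ Λ) : Expr M (appL M Γ Λ) :=
  Expr.var (toVarNil M v)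

/-- Action of an atomic substitution under a lock telescope on a variable. -/
def asubVar : ∀ {m : M.Mode} {Γ Δ : SCtx M m}, ASub M Γ Δ →
    ∀ {n : M.Mode} (Λ : LockTele M n m), VarIn M Δ Λ → Expr M (appL M Γ Λ)
  | _, _, _, .id, _, Λ, v => varExpr M v
  | _, _, _, .done, _, _, v => PEmpty.elim v
  | _, _, _, .wk σ μ, _, Λ, v =>
      arenExpr M (asubVar σ Λ v) (lockTeleA M (piA M μ) Λ)
  | _, _, _, .lock σ μ, _, Λ, v => asubVar σ (.cons μ Λ) v
  | _, _, _, .key Γ₀ Θ Ψ α, _, Λ, v =>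
      varExpr M (cast (varIn_append M Λ Γ₀ Ψ).symm
        (transf M (castCell M (locks_append M Θ Λ).symm (locks_append M Ψ Λ).symm
            (M.hcomp (M.cid (locks M Λ)) α)) Γ₀ LockTele.nil
          (cast (varIn_append M Λ Γ₀ Θ) v)))
  | _, _, _, @ASub.ext _ _ _ Γ Δ σ μ t, _, Λ, v =>
      match v with
      | Sum.inl ⟨h, β⟩ =>
          (by cases h; exact
            arenExpr M t (ARen.key Γ (LockTele.cons μ LockTele.nil) Λ
              (castCell M (locks_cons_nil M μ).symm rfl β)))
      | Sum.inr v' => asubVar σ Λ v'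

/-- Lifting of an atomic substitution. -/
def liftS {m k : M.Mode} {Γ Δ : SCtx M m} (σ : ASub M Γ Δ) (μ : M.Hom k m) :
    ASub M (SCtx.ext Γ μ) (SCtx.ext Δ μ) :=
  ASub.ext (ASub.wk σ μ) (Expr.var (vzeroLift M μ))

/-- Locking an atomic substitution by all locks of a lock telescope. -/
def lockTeleS {m : M.Mode} {Γ Δ : SCtx M m} (σ : ASub M Γ Δ) :
    ∀ {n : M.Mode} (Λ : LockTele M n m), ASub M (appL M Γ Λ) (appL M Δ Λ)
  | _, .nil => σ
  | _, .cons ρ Λ => lockTeleS (ASub.lock σ ρ) Λ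

/-- Action of an atomic substitution on an SFMTT expression. -/
def asubExpr : ∀ {m : M.Mode} {Δ : SCtx M m}, Expr M Δ →
    ∀ {Γ : SCtx M m}, ASub M Γ Δ → Expr M Γ
  | _, _, .var v, _, σ => asubVar M σ LockTele.nil v
  | _, _, .bool, _, _ => .bool
  | _, _, .tt, _, _ => .tt
  | _, _, .ff, _, _ => .ff
  | _, _, .ifte A s t t', _, σ =>
      .ifte (asubExpr A (liftS M σ (M.id _))) (asubExpr s σ) (asubExpr t σ) (asubExpr t' σ)
  | _, _, .arrow μ A B, _, σ =>
      .arrow μ (asubExpr A (ASub.lock σ μ)) (asubExpr B (liftS M σ μ))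
  | _, _, .lam μ t, _, σ => .lam μ (asubExpr t (liftS M σ μ))
  | _, _, .app μ f t, _, σ => .app μ (asubExpr f σ) (asubExpr t (ASub.lock σ μ))
  | _, _, .modTy μ A, _, σ => .modTy μ (asubExpr A (ASub.lock σ μ))
  | _, _, .modTm μ t, _, σ => .modTm μ (asubExpr t (ASub.lock σ μ))
  | _, _, .letmod μ ν A B t s, _, σ =>
      .letmod μ ν (asubExpr A (ASub.lock (ASub.lock σ ν) μ)) (asubExpr B (liftS M σ ν))
        (asubExpr t (ASub.lock σ ν)) (asubExpr s (liftS M σ (M.comp μ ν)))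


/-- Regular SFMTT renamings: finite sequences of atomic renamings. -/
inductive Ren (M : ModeTheory) : ∀ {m : M.Mode}, SCtx M m → SCtx M m → Type where
  | id {m : M.Mode} {Γ : SCtx M m} : Ren M Γ Γ
  | snoc {m : M.Mode} {Γ Δ Ξ : SCtx M m} (σ : Ren M Δ Ξ) (τ : ARen M Γ Δ) : Ren M Γ Ξ

/-- Regular SFMTT substitutions: finite sequences of atomic substitutions. -/
inductive Sub (M : ModeTheory) : ∀ {m : M.Mode}, SCtx M m → SCtx M m → Type where
  | id {m : M.Mode} {Γ : SCtx M m} : Sub M Γ Γ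
  | snoc {m : M.Mode} {Γ Δ Ξ : SCtx M m} (σ : Sub M Δ Ξ) (τ : ASub M Γ Δ) : Sub M Γ Ξ

/-- Mixed sequences of atomic renamings and atomic substitutions. -/
inductive Mix (M : ModeTheory) : ∀ {m : M.Mode}, SCtx M m → SCtx M m → Type where
  | id {m : M.Mode} {Γ : SCtx M m} : Mix M Γ Γ
  | snocR {m : M.Mode} {Γ Δ Ξ : SCtx M m} (σ : Mix M Δ Ξ) (τ : ARen M Γ Δ) : Mix M Γ Ξ
  | snocS {m : M.Mode} {Γ Δ Ξ : SCtx M m} (σ : Mix M Δ Ξ) (τ : ASub M Γ Δ) : Mix M Γ Ξ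

/-- Action of a regular renaming on an expression. -/
def renExpr {m : M.Mode} {Ξ : SCtx M m} (t : Expr M Ξ) :
    ∀ {Γ : SCtx M m}, Ren M Γ Ξ → Expr M Γ
  | _, .id => t
  | _, .snoc σ τ => arenExpr M (renExpr t σ) τ

/-- Action of a regular substitution on an expression. -/
def subExpr {m : M.Mode} {Ξ : SCtx M m} (t : Expr M Ξ) :
    ∀ {Γ : SCtx M m}, Sub M Γ Ξ → Expr M Γ
  | _, .id => t
  | _, .snoc σ τ => asubExpr M (subExpr t σ) τ

/-- Action of a mixed sequence on an expression. -/
def mixExpr {m : M.Mode} {Ξ : SCtx M m} (t : Expr M Ξ) :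
    ∀ {Γ : SCtx M m}, Mix M Γ Ξ → Expr M Γ
  | _, .id => t
  | _, .snocR σ τ => arenExpr M (mixExpr t σ) τ
  | _, .snocS σ τ => asubExpr M (mixExpr t σ) τ

/-- Concatenation of regular substitutions (`concatSub σ τ` applies `σ` first). -/
def concatSub {m : M.Mode} {Δ Ξ : SCtx M m} (σ : Sub M Δ Ξ) :
    ∀ {Γ : SCtx M m}, Sub M Γ Δ → Sub M Γ Ξ
  | _, .id => σ
  | _, .snoc τ a => .snoc (concatSub σ τ) a

/-- Componentwise lifting of a regular renaming. -/
def liftRen {m k : M.Mode} (μ : M.Hom k m) :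
    ∀ {Γ Δ : SCtx M m}, Ren M Γ Δ → Ren M (SCtx.ext Γ μ) (SCtx.ext Δ μ)
  | _, _, .id => .id
  | _, _, .snoc σ τ => .snoc (liftRen μ σ) (liftA M τ μ)

/-- Componentwise lifting of a regular substitution. -/
def liftSub {m k : M.Mode} (μ : M.Hom k m) :
    ∀ {Γ Δ : SCtx M m}, Sub M Γ Δ → Sub M (SCtx.ext Γ μ) (SCtx.ext Δ μ)
  | _, _, .id => .id
  | _, _, .snoc σ τ => .snoc (liftSub μ σ) (liftS M τ μ)

/-- Componentwise lifting of a mixed sequence. -/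
def liftMix {m k : M.Mode} (μ : M.Hom k m) :
    ∀ {Γ Δ : SCtx M m}, Mix M Γ Δ → Mix M (SCtx.ext Γ μ) (SCtx.ext Δ μ)
  | _, _, .id => .id
  | _, _, .snocR σ τ => .snocR (liftMix μ σ) (liftA M τ μ)
  | _, _, .snocS σ τ => .snocS (liftMix μ σ) (liftS M τ μ)

/-- Componentwise locking of a regular renaming. -/
def lockRen {m n : M.Mode} (μ : M.Hom m n) :
    ∀ {Γ Δ : SCtx M n}, Ren M Γ Δ → Ren M (SCtx.lock Γ μ) (SCtx.lock Δ μ)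
  | _, _, .id => .id
  | _, _, .snoc σ τ => .snoc (lockRen μ σ) (ARen.lock τ μ)

/-- Componentwise locking of a regular substitution. -/
def lockSub {m n : M.Mode} (μ : M.Hom m n) :
    ∀ {Γ Δ : SCtx M n}, Sub M Γ Δ → Sub M (SCtx.lock Γ μ) (SCtx.lock Δ μ)
  | _, _, .id => .id
  | _, _, .snoc σ τ => .snoc (lockSub μ σ) (ASub.lock τ μ)

/-- Componentwise locking of a mixed sequence. -/
def lockMix {m n : M.Mode} (μ : M.Hom m n) :
    ∀ {Γ Δ : SCtx M n}, Mix M Γ Δ → Mix M (SCtx.lock Γ μ) (SCtx.lock Δ μ)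
  | _, _, .id => .id
  | _, _, .snocR σ τ => .snocR (lockMix μ σ) (ARen.lock τ μ)
  | _, _, .snocS σ τ => .snocS (lockMix μ σ) (ASub.lock τ μ)

/-- Locking a regular substitution by all locks of a lock telescope. -/
def lockTeleSub {m : M.Mode} {Γ Δ : SCtx M m} (σ : Sub M Γ Δ) :
    ∀ {n : M.Mode} (Λ : LockTele M n m), Sub M (appL M Γ Λ) (appL M Δ Λ)
  | _, .nil => σ
  | _, .cons ρ Λ => lockTeleSub (lockSub M ρ σ) Λ

/-- Locking a mixed sequence by all locks of a lock telescope. -/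
def lockTeleMix {m : M.Mode} {Γ Δ : SCtx M m} (σ : Mix M Γ Δ) :
    ∀ {n : M.Mode} (Λ : LockTele M n m), Mix M (appL M Γ Λ) (appL M Δ Λ)
  | _, .nil => σ
  | _, .cons ρ Λ => lockTeleMix (lockMix M ρ σ) Λ

/-- Scoping telescopes from inner mode `m` to outer mode `n`
(built from the inner end, as in the paper). -/
inductive Tele (M : ModeTheory) : M.Mode → M.Mode → Type where
  | nil {m : M.Mode} : Tele M m m
  | ext {m n k : M.Mode} (Φ : Tele M m n) (μ : M.Hom k m) : Tele M m n
  | lock {m n k : M.Mode} (Φ : Tele M m n) (μ : M.Hom k m) : Tele M k n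

/-- Appending a scoping telescope to a scoping context (auxiliary argument order). -/
def appT' : ∀ {m n : M.Mode}, Tele M m n → SCtx M n → SCtx M m
  | _, _, .nil, Γ => Γ
  | _, _, .ext Φ μ, Γ => SCtx.ext (appT' Φ Γ) μ
  | _, _, .lock Φ μ, Γ => SCtx.lock (appT' Φ Γ) μ

/-- Appending a scoping telescope to a scoping context. -/
abbrev appT {n m : M.Mode} (Γ : SCtx M n) (Φ : Tele M m n) : SCtx M m := appT' M Φ Γ

/-- Applying a scoping telescope to an atomic renaming. -/
def teleARen {m : M.Mode} {Γ Δ : SCtx M m} (σ : ARen M Γ Δ) :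
    ∀ {n : M.Mode} (Φ : Tele M n m), ARen M (appT M Γ Φ) (appT M Δ Φ)
  | _, .nil => σ
  | _, .ext Φ μ => liftA M (teleARen σ Φ) μ
  | _, .lock Φ μ => ARen.lock (teleARen σ Φ) μ

/-- Applying a scoping telescope to an atomic substitution. -/
def teleASub {m : M.Mode} {Γ Δ : SCtx M m} (σ : ASub M Γ Δ) :
    ∀ {n : M.Mode} (Φ : Tele M n m), ASub M (appT M Γ Φ) (appT M Δ Φ)
  | _, .nil => σ
  | _, .ext Φ μ => liftS M (teleASub σ Φ) μ
  | _, .lock Φ μ => ASub.lock (teleASub σ Φ) μ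

/-- Applying a scoping telescope to a regular substitution. -/
def teleSub {m : M.Mode} {Γ Δ : SCtx M m} (σ : Sub M Γ Δ) :
    ∀ {n : M.Mode} (Φ : Tele M n m), Sub M (appT M Γ Φ) (appT M Δ Φ)
  | _, .nil => σ
  | _, .ext Φ μ => liftSub M μ (teleSub σ Φ)
  | _, .lock Φ μ => lockSub M μ (teleSub σ Φ)

/-- Applying a scoping telescope to a mixed sequence. -/
def teleMix {m : M.Mode} {Γ Δ : SCtx M m} (σ : Mix M Γ Δ) :
    ∀ {n : M.Mode} (Φ : Tele M n m), Mix M (appT M Γ Φ) (appT M Δ Φ)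
  | _, .nil => σ
  | _, .ext Φ μ => liftMix M μ (teleMix σ Φ)
  | _, .lock Φ μ => lockMix M μ (teleMix σ Φ)

/-- Observational equivalence of regular SFMTT substitutions. -/
def ObsEq {m : M.Mode} {Γ Δ : SCtx M m} (σ τ : Sub M Γ Δ) : Prop :=
  ∀ (t : Expr M Δ), subExpr M t σ = subExpr M t τ


mutual
/-- WSMTT expressions (with explicit substitutions). -/
inductive WExpr (M : ModeTheory) : ∀ {m : M.Mode}, SCtx M m → Type where
  | vzero {m n : M.Mode} {Γ : SCtx M n} (μ : M.Hom m n) :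
      WExpr M (SCtx.lock (SCtx.ext Γ μ) μ)
  | sub {m : M.Mode} {Δ : SCtx M m} (t : WExpr M Δ) {Γ : SCtx M m}
      (σ : WSub M Γ Δ) : WExpr M Γ
  | bool {m : M.Mode} {Γ : SCtx M m} : WExpr M Γ
  | tt {m : M.Mode} {Γ : SCtx M m} : WExpr M Γ
  | ff {m : M.Mode} {Γ : SCtx M m} : WExpr M Γ
  | ifte {m : M.Mode} {Γ : SCtx M m} (A : WExpr M (SCtx.ext Γ (M.id m)))
      (s t t' : WExpr M Γ) : WExpr M Γ
  | arrow {m n : M.Mode} {Γ : SCtx M n} (μ : M.Hom m n)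
      (A : WExpr M (SCtx.lock Γ μ)) (B : WExpr M (SCtx.ext Γ μ)) : WExpr M Γ
  | lam {m n : M.Mode} {Γ : SCtx M n} (μ : M.Hom m n)
      (t : WExpr M (SCtx.ext Γ μ)) : WExpr M Γ
  | app {m n : M.Mode} {Γ : SCtx M n} (μ : M.Hom m n)
      (f : WExpr M Γ) (t : WExpr M (SCtx.lock Γ μ)) : WExpr M Γ
  | modTy {m n : M.Mode} {Γ : SCtx M n} (μ : M.Hom m n)
      (A : WExpr M (SCtx.lock Γ μ)) : WExpr M Γ
  | modTm {m n : M.Mode} {Γ : SCtx M n} (μ : M.Hom m n)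
      (t : WExpr M (SCtx.lock Γ μ)) : WExpr M Γ
  | letmod {m n o : M.Mode} {Γ : SCtx M o} (μ : M.Hom m n) (ν : M.Hom n o)
      (A : WExpr M (SCtx.lock (SCtx.lock Γ ν) μ)) (B : WExpr M (SCtx.ext Γ ν))
      (t : WExpr M (SCtx.lock Γ ν)) (s : WExpr M (SCtx.ext Γ (M.comp μ ν))) : WExpr M Γ

/-- WSMTT explicit substitutions. -/
inductive WSub (M : ModeTheory) : ∀ {m : M.Mode}, SCtx M m → SCtx M m → Type where
  | done {m : M.Mode} {Γ : SCtx M m} : WSub M Γ SCtx.empty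
  | id {m : M.Mode} {Γ : SCtx M m} : WSub M Γ Γ
  | wk {m k : M.Mode} {Γ : SCtx M m} (μ : M.Hom k m) : WSub M (SCtx.ext Γ μ) Γ
  | comp {m : M.Mode} {Γ Δ Ξ : SCtx M m} (σ : WSub M Δ Ξ) (τ : WSub M Γ Δ) :
      WSub M Γ Ξ
  | lock {m n : M.Mode} {Γ Δ : SCtx M n} (σ : WSub M Γ Δ) (μ : M.Hom m n) :
      WSub M (SCtx.lock Γ μ) (SCtx.lock Δ μ)
  | key {m n : M.Mode} (Γ : SCtx M m) (Θ Ψ : LockTele M n m)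
      (α : M.Cell (locks M Θ) (locks M Ψ)) : WSub M (appL M Γ Ψ) (appL M Γ Θ)
  | ext {m n : M.Mode} {Γ Δ : SCtx M n} (σ : WSub M Γ Δ) {μ : M.Hom m n}
      (t : WExpr M (SCtx.lock Γ μ)) : WSub M Γ (SCtx.ext Δ μ)
end

/-- Cast a WSMTT substitution along equalities of scoping contexts. -/
def castW {m : M.Mode} {Γ Γ' Δ Δ' : SCtx M m} (h1 : Γ = Γ') (h2 : Δ = Δ')
    (σ : WSub M Γ Δ) : WSub M Γ' Δ' := h1 ▸ h2 ▸ σ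

/-- The WSMTT lifting `σ⁺ := (σ ∘ π).v0`. -/
def wlift {m k : M.Mode} {Γ Δ : SCtx M m} (σ : WSub M Γ Δ) (μ : M.Hom k m) :
    WSub M (SCtx.ext Γ μ) (SCtx.ext Δ μ) :=
  WSub.ext (WSub.comp σ (WSub.wk μ)) (WExpr.vzero μ)

/-- Locking a WSMTT substitution by all locks of a lock telescope. -/
def lockTeleW {m : M.Mode} {Γ Δ : SCtx M m} (σ : WSub M Γ Δ) :
    ∀ {n : M.Mode} (Λ : LockTele M n m), WSub M (appL M Γ Λ) (appL M Δ Λ)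
  | _, .nil => σ
  | _, .cons ρ Λ => lockTeleW (WSub.lock σ ρ) Λ

mutual
/-- σ-equivalence of WSMTT expressions. -/
inductive EqE (M : ModeTheory) : ∀ {m : M.Mode} {Γ : SCtx M m},
    WExpr M Γ → WExpr M Γ → Prop where
  | refl {m : M.Mode} {Γ : SCtx M m} (t : WExpr M Γ) : EqE M t t
  | symm {m : M.Mode} {Γ : SCtx M m} {t s : WExpr M Γ} : EqE M t s → EqE M s t
  | trans {m : M.Mode} {Γ : SCtx M m} {t s u : WExpr M Γ} :
      EqE M t s → EqE M s u → EqE M t u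
  | congSub {m : M.Mode} {Γ Δ : SCtx M m} {t₁ t₂ : WExpr M Δ} {σ₁ σ₂ : WSub M Γ Δ} :
      EqE M t₁ t₂ → EqS M σ₁ σ₂ → EqE M (WExpr.sub t₁ σ₁) (WExpr.sub t₂ σ₂)
  | congIfte {m : M.Mode} {Γ : SCtx M m} {A₁ A₂ : WExpr M (SCtx.ext Γ (M.id m))}
      {s₁ s₂ t₁ t₂ u₁ u₂ : WExpr M Γ} :
      EqE M A₁ A₂ → EqE M s₁ s₂ → EqE M t₁ t₂ → EqE M u₁ u₂ →
      EqE M (WExpr.ifte A₁ s₁ t₁ u₁) (WExpr.ifte A₂ s₂ t₂ u₂)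
  | congArrow {m n : M.Mode} {Γ : SCtx M n} (μ : M.Hom m n)
      {A₁ A₂ : WExpr M (SCtx.lock Γ μ)} {B₁ B₂ : WExpr M (SCtx.ext Γ μ)} :
      EqE M A₁ A₂ → EqE M B₁ B₂ → EqE M (WExpr.arrow μ A₁ B₁) (WExpr.arrow μ A₂ B₂)
  | congLam {m n : M.Mode} {Γ : SCtx M n} (μ : M.Hom m n)
      {t₁ t₂ : WExpr M (SCtx.ext Γ μ)} :
      EqE M t₁ t₂ → EqE M (WExpr.lam μ t₁) (WExpr.lam μ t₂)
  | congApp {m n : M.Mode} {Γ : SCtx M n} (μ : M.Hom m n) {f₁ f₂ : WExpr M Γ}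
      {t₁ t₂ : WExpr M (SCtx.lock Γ μ)} :
      EqE M f₁ f₂ → EqE M t₁ t₂ → EqE M (WExpr.app μ f₁ t₁) (WExpr.app μ f₂ t₂)
  | congModTy {m n : M.Mode} {Γ : SCtx M n} (μ : M.Hom m n)
      {A₁ A₂ : WExpr M (SCtx.lock Γ μ)} :
      EqE M A₁ A₂ → EqE M (WExpr.modTy μ A₁) (WExpr.modTy μ A₂)
  | congModTm {m n : M.Mode} {Γ : SCtx M n} (μ : M.Hom m n)
      {t₁ t₂ : WExpr M (SCtx.lock Γ μ)} :
      EqE M t₁ t₂ → EqE M (WExpr.modTm μ t₁) (WExpr.modTm μ t₂)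
  | congLetmod {m n o : M.Mode} {Γ : SCtx M o} (μ : M.Hom m n) (ν : M.Hom n o)
      {A₁ A₂ : WExpr M (SCtx.lock (SCtx.lock Γ ν) μ)} {B₁ B₂ : WExpr M (SCtx.ext Γ ν)}
      {t₁ t₂ : WExpr M (SCtx.lock Γ ν)} {s₁ s₂ : WExpr M (SCtx.ext Γ (M.comp μ ν))} :
      EqE M A₁ A₂ → EqE M B₁ B₂ → EqE M t₁ t₂ → EqE M s₁ s₂ →
      EqE M (WExpr.letmod μ ν A₁ B₁ t₁ s₁) (WExpr.letmod μ ν A₂ B₂ t₂ s₂)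
  | subId {m : M.Mode} {Γ : SCtx M m} (t : WExpr M Γ) :
      EqE M (WExpr.sub t WSub.id) t
  | subComp {m : M.Mode} {Γ Δ Ξ : SCtx M m} (t : WExpr M Ξ) (σ : WSub M Δ Ξ)
      (τ : WSub M Γ Δ) :
      EqE M (WExpr.sub t (WSub.comp σ τ)) (WExpr.sub (WExpr.sub t σ) τ)
  | boolSub {m : M.Mode} {Γ Δ : SCtx M m} (σ : WSub M Γ Δ) :
      EqE M (WExpr.sub WExpr.bool σ) WExpr.bool
  | ttSub {m : M.Mode} {Γ Δ : SCtx M m} (σ : WSub M Γ Δ) :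
      EqE M (WExpr.sub WExpr.tt σ) WExpr.tt
  | ffSub {m : M.Mode} {Γ Δ : SCtx M m} (σ : WSub M Γ Δ) :
      EqE M (WExpr.sub WExpr.ff σ) WExpr.ff
  | ifteSub {m : M.Mode} {Γ Δ : SCtx M m} (A : WExpr M (SCtx.ext Δ (M.id m)))
      (s t t' : WExpr M Δ) (σ : WSub M Γ Δ) :
      EqE M (WExpr.sub (WExpr.ifte A s t t') σ)
        (WExpr.ifte (WExpr.sub A (wlift M σ (M.id m))) (WExpr.sub s σ)
          (WExpr.sub t σ) (WExpr.sub t' σ))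
  | arrowSub {m n : M.Mode} {Γ Δ : SCtx M n} (μ : M.Hom m n)
      (A : WExpr M (SCtx.lock Δ μ)) (B : WExpr M (SCtx.ext Δ μ)) (σ : WSub M Γ Δ) :
      EqE M (WExpr.sub (WExpr.arrow μ A B) σ)
        (WExpr.arrow μ (WExpr.sub A (WSub.lock σ μ)) (WExpr.sub B (wlift M σ μ)))
  | lamSub {m n : M.Mode} {Γ Δ : SCtx M n} (μ : M.Hom m n)
      (t : WExpr M (SCtx.ext Δ μ)) (σ : WSub M Γ Δ) :
      EqE M (WExpr.sub (WExpr.lam μ t) σ) (WExpr.lam μ (WExpr.sub t (wlift M σ μ)))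
  | appSub {m n : M.Mode} {Γ Δ : SCtx M n} (μ : M.Hom m n) (f : WExpr M Δ)
      (t : WExpr M (SCtx.lock Δ μ)) (σ : WSub M Γ Δ) :
      EqE M (WExpr.sub (WExpr.app μ f t) σ)
        (WExpr.app μ (WExpr.sub f σ) (WExpr.sub t (WSub.lock σ μ)))
  | modTySub {m n : M.Mode} {Γ Δ : SCtx M n} (μ : M.Hom m n)
      (A : WExpr M (SCtx.lock Δ μ)) (σ : WSub M Γ Δ) :
      EqE M (WExpr.sub (WExpr.modTy μ A) σ) (WExpr.modTy μ (WExpr.sub A (WSub.lock σ μ)))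
  | modTmSub {m n : M.Mode} {Γ Δ : SCtx M n} (μ : M.Hom m n)
      (t : WExpr M (SCtx.lock Δ μ)) (σ : WSub M Γ Δ) :
      EqE M (WExpr.sub (WExpr.modTm μ t) σ) (WExpr.modTm μ (WExpr.sub t (WSub.lock σ μ)))
  | letmodSub {m n o : M.Mode} {Γ Δ : SCtx M o} (μ : M.Hom m n) (ν : M.Hom n o)
      (A : WExpr M (SCtx.lock (SCtx.lock Δ ν) μ)) (B : WExpr M (SCtx.ext Δ ν))
      (t : WExpr M (SCtx.lock Δ ν)) (s : WExpr M (SCtx.ext Δ (M.comp μ ν)))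
      (σ : WSub M Γ Δ) :
      EqE M (WExpr.sub (WExpr.letmod μ ν A B t s) σ)
        (WExpr.letmod μ ν (WExpr.sub A (WSub.lock (WSub.lock σ ν) μ))
          (WExpr.sub B (wlift M σ ν)) (WExpr.sub t (WSub.lock σ ν))
          (WExpr.sub s (wlift M σ (M.comp μ ν))))
  | extVar {m n : M.Mode} {Γ Δ : SCtx M n} (σ : WSub M Γ Δ) {μ : M.Hom m n}
      (t : WExpr M (SCtx.lock Γ μ)) :
      EqE M (WExpr.sub (WExpr.vzero μ) (WSub.lock (WSub.ext σ t) μ)) t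

/-- σ-equivalence of WSMTT substitutions. -/
inductive EqS (M : ModeTheory) : ∀ {m : M.Mode} {Γ Δ : SCtx M m},
    WSub M Γ Δ → WSub M Γ Δ → Prop where
  | refl {m : M.Mode} {Γ Δ : SCtx M m} (σ : WSub M Γ Δ) : EqS M σ σ
  | symm {m : M.Mode} {Γ Δ : SCtx M m} {σ τ : WSub M Γ Δ} : EqS M σ τ → EqS M τ σ
  | trans {m : M.Mode} {Γ Δ : SCtx M m} {σ τ ρ : WSub M Γ Δ} :
      EqS M σ τ → EqS M τ ρ → EqS M σ ρ
  | congComp {m : M.Mode} {Γ Δ Ξ : SCtx M m} {σ₁ σ₂ : WSub M Δ Ξ}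
      {τ₁ τ₂ : WSub M Γ Δ} : EqS M σ₁ σ₂ → EqS M τ₁ τ₂ →
      EqS M (WSub.comp σ₁ τ₁) (WSub.comp σ₂ τ₂)
  | congLock {m n : M.Mode} {Γ Δ : SCtx M n} {σ₁ σ₂ : WSub M Γ Δ} (μ : M.Hom m n) :
      EqS M σ₁ σ₂ → EqS M (WSub.lock σ₁ μ) (WSub.lock σ₂ μ)
  | congExt {m n : M.Mode} {Γ Δ : SCtx M n} {σ₁ σ₂ : WSub M Γ Δ} {μ : M.Hom m n}
      {t₁ t₂ : WExpr M (SCtx.lock Γ μ)} : EqS M σ₁ σ₂ → EqE M t₁ t₂ →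
      EqS M (WSub.ext σ₁ t₁) (WSub.ext σ₂ t₂)
  | idLeft {m : M.Mode} {Γ Δ : SCtx M m} (σ : WSub M Γ Δ) :
      EqS M (WSub.comp WSub.id σ) σ
  | idRight {m : M.Mode} {Γ Δ : SCtx M m} (σ : WSub M Γ Δ) :
      EqS M (WSub.comp σ WSub.id) σ
  | compAssoc {m : M.Mode} {Γ Δ Ξ Ω : SCtx M m} (σ : WSub M Ξ Ω) (τ : WSub M Δ Ξ)
      (ρ : WSub M Γ Δ) :
      EqS M (WSub.comp (WSub.comp σ τ) ρ) (WSub.comp σ (WSub.comp τ ρ))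
  | emptyUnique {m : M.Mode} {Γ : SCtx M m} (σ : WSub M Γ SCtx.empty) :
      EqS M σ WSub.done
  | extWeaken {m n : M.Mode} {Γ Δ : SCtx M n} (σ : WSub M Γ Δ) {μ : M.Hom m n}
      (t : WExpr M (SCtx.lock Γ μ)) :
      EqS M (WSub.comp (WSub.wk μ) (WSub.ext σ t)) σ
  | extEta {m n : M.Mode} {Γ Δ : SCtx M n} {μ : M.Hom m n}
      (σ : WSub M Γ (SCtx.ext Δ μ)) :
      EqS M σ (WSub.ext (WSub.comp (WSub.wk μ) σ)
        (WExpr.sub (WExpr.vzero μ) (WSub.lock σ μ)))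
  | lockId {m n : M.Mode} {Γ : SCtx M n} (μ : M.Hom m n) :
      EqS M (WSub.lock (WSub.id (Γ := Γ)) μ) WSub.id
  | lockComp {m n : M.Mode} {Γ Δ Ξ : SCtx M n} (σ : WSub M Δ Ξ) (τ : WSub M Γ Δ)
      (μ : M.Hom m n) :
      EqS M (WSub.lock (WSub.comp σ τ) μ) (WSub.comp (WSub.lock σ μ) (WSub.lock τ μ))
  | keyNatural {m n : M.Mode} {Γ Δ : SCtx M m} (Λ Θ : LockTele M n m)
      (α : M.Cell (locks M Λ) (locks M Θ)) (σ : WSub M Γ Δ) :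
      EqS M (WSub.comp (WSub.key Δ Λ Θ α) (lockTeleW M σ Θ))
        (WSub.comp (lockTeleW M σ Λ) (WSub.key Γ Λ Θ α))
  | keyUnit {m n : M.Mode} (Γ : SCtx M m) (Λ : LockTele M n m) :
      EqS M (WSub.key Γ Λ Λ (M.cid (locks M Λ))) WSub.id
  | keyVert {m n : M.Mode} (Γ : SCtx M m) (Λ Θ Ψ : LockTele M n m)
      (α : M.Cell (locks M Λ) (locks M Θ)) (β : M.Cell (locks M Θ) (locks M Ψ)) :
      EqS M (WSub.key Γ Λ Ψ (M.vcomp α β))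
        (WSub.comp (WSub.key Γ Λ Θ α) (WSub.key Γ Θ Ψ β))
  | keyHor {m n o : M.Mode} (Γ : SCtx M m) (Λ₁ Λ₂ : LockTele M n m)
      (Θ₁ Θ₂ : LockTele M o n) (β : M.Cell (locks M Λ₁) (locks M Λ₂))
      (α : M.Cell (locks M Θ₁) (locks M Θ₂)) :
      EqS M (WSub.key Γ (appLT M Λ₁ Θ₁) (appLT M Λ₂ Θ₂)
          (castCell M (locks_append M Λ₁ Θ₁).symm (locks_append M Λ₂ Θ₂).symm
            (M.hcomp α β)))
        (castW M (appL_append M Γ Λ₂ Θ₂) (appL_append M Γ Λ₁ Θ₁)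
          (WSub.comp (lockTeleW M (WSub.key Γ Λ₁ Λ₂ β) Θ₁)
            (WSub.key (appL M Γ Λ₂) Θ₁ Θ₂ α)))
end


mutual
/-- Translation of WSMTT expressions to SFMTT expressions. -/
def trE : ∀ {m : M.Mode} {Γ : SCtx M m}, WExpr M Γ → Expr M Γ
  | _, _, .vzero μ => Expr.var (vzeroLift M μ)
  | _, _, .sub t σ => subExpr M (trE t) (trS σ)
  | _, _, .bool => .bool
  | _, _, .tt => .tt
  | _, _, .ff => .ff
  | _, _, .ifte A s t t' => .ifte (trE A) (trE s) (trE t) (trE t')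
  | _, _, .arrow μ A B => .arrow μ (trE A) (trE B)
  | _, _, .lam μ t => .lam μ (trE t)
  | _, _, .app μ f t => .app μ (trE f) (trE t)
  | _, _, .modTy μ A => .modTy μ (trE A)
  | _, _, .modTm μ t => .modTm μ (trE t)
  | _, _, .letmod μ ν A B t s => .letmod μ ν (trE A) (trE B) (trE t) (trE s)

/-- Translation of WSMTT substitutions to regular SFMTT substitutions. -/
def trS : ∀ {m : M.Mode} {Γ Δ : SCtx M m}, WSub M Γ Δ → Sub M Γ Δ
  | _, _, _, .done => Sub.snoc Sub.id ASub.done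
  | _, _, _, .id => Sub.id
  | _, _, _, .wk μ => Sub.snoc Sub.id (ASub.wk ASub.id μ)
  | _, _, _, .comp σ τ => concatSub M (trS σ) (trS τ)
  | _, _, _, .lock σ μ => lockSub M μ (trS σ)
  | _, _, _, .key Γ Θ Ψ α => Sub.snoc Sub.id (ASub.key Γ Θ Ψ α)
  | _, _, _, @WSub.ext _ _ _ _ _ σ μ t =>
      Sub.snoc (liftSub M μ (trS σ)) (ASub.ext ASub.id (trE t))
end

/-- Embedding of SFMTT variables into WSMTT expressions. -/
def embVar : ∀ {n : M.Mode} (Γ : SCtx M n) {m : M.Mode} (Θ : LockTele M m n),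
    VarIn M Γ Θ → WExpr M (appL M Γ Θ)
  | _, .empty, _, _, v => PEmpty.elim v
  | _, .lock Γ ρ, _, Θ, v => embVar Γ (.cons ρ Θ) v
  | _, .ext Γ μ, _, Θ, v =>
      match v with
      | Sum.inl ⟨h, α⟩ =>
          (by cases h; exact WExpr.sub (WExpr.vzero μ)
                (WSub.key (SCtx.ext Γ μ) (LockTele.cons μ LockTele.nil) Θ
                  (castCell M (locks_cons_nil M μ).symm rfl α)))
      | Sum.inr w => WExpr.sub (embVar Γ Θ w) (lockTeleW M (WSub.wk μ) Θ)

/-- Embedding of SFMTT expressions into WSMTT expressions. -/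
def embE : ∀ {m : M.Mode} {Γ : SCtx M m}, Expr M Γ → WExpr M Γ
  | _, _, .var v => embVar M _ LockTele.nil v
  | _, _, .bool => .bool
  | _, _, .tt => .tt
  | _, _, .ff => .ff
  | _, _, .ifte A s t t' => .ifte (embE A) (embE s) (embE t) (embE t')
  | _, _, .arrow μ A B => .arrow μ (embE A) (embE B)
  | _, _, .lam μ t => .lam μ (embE t)
  | _, _, .app μ f t => .app μ (embE f) (embE t)
  | _, _, .modTy μ A => .modTy μ (embE A)
  | _, _, .modTm μ t => .modTm μ (embE t)
  | _, _, .letmod μ ν A B t s => .letmod μ ν (embE A) (embE B) (embE t) (embE s)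

/-- Embedding of atomic SFMTT renamings into WSMTT substitutions. -/
def embARen : ∀ {m : M.Mode} {Γ Δ : SCtx M m}, ARen M Γ Δ → WSub M Γ Δ
  | _, _, _, .done => WSub.done
  | _, _, _, .id => WSub.id
  | _, _, _, .wk σ μ => WSub.comp (embARen σ) (WSub.wk μ)
  | _, _, _, .lock σ μ => WSub.lock (embARen σ) μ
  | _, _, _, .key Γ Θ Ψ α => WSub.key Γ Θ Ψ α
  | _, _, _, @ARen.ext _ _ _ _ _ σ μ v => WSub.ext (embARen σ) (embVar M _ _ v)

/-- Embedding of atomic SFMTT substitutions into WSMTT substitutions. -/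
def embASub : ∀ {m : M.Mode} {Γ Δ : SCtx M m}, ASub M Γ Δ → WSub M Γ Δ
  | _, _, _, .done => WSub.done
  | _, _, _, .id => WSub.id
  | _, _, _, .wk σ μ => WSub.comp (embASub σ) (WSub.wk μ)
  | _, _, _, .lock σ μ => WSub.lock (embASub σ) μ
  | _, _, _, .key Γ Θ Ψ α => WSub.key Γ Θ Ψ α
  | _, _, _, .ext σ t => WSub.ext (embASub σ) (embE M t)

/-- Embedding of regular SFMTT renamings into WSMTT substitutions. -/
def embRen : ∀ {m : M.Mode} {Γ Δ : SCtx M m}, Ren M Γ Δ → WSub M Γ Δ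
  | _, _, _, .id => WSub.id
  | _, _, _, .snoc σ τ => WSub.comp (embRen σ) (embARen M τ)

/-- Embedding of regular SFMTT substitutions into WSMTT substitutions. -/
def embSub : ∀ {m : M.Mode} {Γ Δ : SCtx M m}, Sub M Γ Δ → WSub M Γ Δ
  | _, _, _, .id => WSub.id
  | _, _, _, .snoc σ τ => WSub.comp (embSub σ) (embASub M τ)


/-- Cast an SFMTT expression along an equality of scoping contexts. -/
def castE {m : M.Mode} {Γ Γ' : SCtx M m} (h : Γ = Γ') (t : Expr M Γ) : Expr M Γ' :=
  h ▸ t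


namespace KeyNat
variable (M : ModeTheory)

theorem castCell_heq {m n : M.Mode} {μ μ' ν ν' : M.Hom m n} (h1 : μ = μ') (h2 : ν = ν')
    (α : M.Cell μ ν) : HEq (castCell M h1 h2 α) α := by
  cases h1; cases h2; rfl

theorem vcomp_congr {m n : M.Mode} {μ μ' ν ν' ρ ρ' : M.Hom m n}
    (h1 : μ = μ') (h2 : ν = ν') (h3 : ρ = ρ')
    {α : M.Cell μ ν} {α' : M.Cell μ' ν'} {β : M.Cell ν ρ} {β' : M.Cell ν' ρ'}
    (hα : HEq α α') (hβ : HEq β β') : HEq (M.vcomp α β) (M.vcomp α' β') := by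
  cases h1; cases h2; cases h3; cases hα; cases hβ; rfl

theorem hcomp_congr {m n o : M.Mode} {μ μ' ν ν' : M.Hom m n} {κ κ' ι ι' : M.Hom n o}
    (h1 : μ = μ') (h2 : ν = ν') (h3 : κ = κ') (h4 : ι = ι')
    {α : M.Cell μ ν} {α' : M.Cell μ' ν'} {β : M.Cell κ ι} {β' : M.Cell κ' ι'}
    (hα : HEq α α') (hβ : HEq β β') : HEq (M.hcomp α β) (M.hcomp α' β') := by
  cases h1; cases h2; cases h3; cases h4; cases hα; cases hβ; rfl

theorem cid_congr {m n : M.Mode} {μ μ' : M.Hom m n} (h : μ = μ') :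
    HEq (M.cid μ) (M.cid μ') := by cases h; rfl

/-- The cell used by `arenVar`/`asubVar` on a key, whiskered on the inner side. -/
def keyCell {n m : M.Mode} {Θ Ψ : LockTele M n m} (α : M.Cell (locks M Θ) (locks M Ψ))
    {l : M.Mode} (Λ : LockTele M l n) :
    M.Cell (locks M (appLT M Θ Λ)) (locks M (appLT M Ψ Λ)) :=
  castCell M (locks_append M Θ Λ).symm (locks_append M Ψ Λ).symm
    (M.hcomp (M.cid (locks M Λ)) α)

/-- The cell used by `transf` at the `ext` case, whiskered on the outer side. -/
def plusCell {n k : M.Mode} {Θ Ψ : LockTele M n k} (γ : M.Cell (locks M Θ) (locks M Ψ))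
    {j : M.Mode} (Λ : LockTele M k j) :
    M.Cell (locks M (appLT M Λ Θ)) (locks M (appLT M Λ Ψ)) :=
  castCell M (locks_append M Λ Θ).symm (locks_append M Λ Ψ).symm
    (M.hcomp γ (M.cid (locks M Λ)))

theorem keyCell_nil_heq {n m : M.Mode} {Θ Ψ : LockTele M n m}
    (α : M.Cell (locks M Θ) (locks M Ψ)) :
    HEq (keyCell M α LockTele.nil) α :=
  (castCell_heq M _ _ _).trans (M.id_hcomp α)

theorem plusCell_nil {n k : M.Mode} {Θ Ψ : LockTele M n k}
    (γ : M.Cell (locks M Θ) (locks M Ψ)) :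
    plusCell M γ LockTele.nil = γ :=
  eq_of_heq ((castCell_heq M _ _ _).trans (M.hcomp_id γ))

theorem appLT_assoc {l j k n : M.Mode} (Λ : LockTele M j l) (Λ' : LockTele M k j)
    (Θ : LockTele M n k) :
    appLT M (appLT M Λ Λ') Θ = appLT M Λ (appLT M Λ' Θ) := by
  induction Λ with
  | nil => rfl
  | cons ρ Λ ih => exact congrArg (LockTele.cons ρ) ih

theorem plusCell_plusCell {n k j i : M.Mode} {Θ Ψ : LockTele M n k}
    (γ : M.Cell (locks M Θ) (locks M Ψ)) (Λ' : LockTele M k j) (Λ : LockTele M j i) :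
    HEq (plusCell M (plusCell M γ Λ') Λ) (plusCell M γ (appLT M Λ Λ')) := by
  refine ((castCell_heq M _ _ _).trans ?_).trans (castCell_heq M _ _ _).symm
  refine HEq.trans (hcomp_congr M (locks_append M Λ' Θ) (locks_append M Λ' Ψ) rfl rfl
    (castCell_heq M _ _ _) (HEq.refl _)) ?_
  refine (M.hcomp_assoc γ (M.cid (locks M Λ')) (M.cid (locks M Λ))).trans ?_
  refine hcomp_congr M rfl rfl (locks_append M Λ Λ').symm (locks_append M Λ Λ').symm
    (HEq.refl γ) ?_
  rw [M.hcomp_cid]; exact cid_congr M (locks_append M Λ Λ').symm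


theorem plusCell_vcomp {n k : M.Mode} {Θ Φ Ψ : LockTele M n k}
    (a : M.Cell (locks M Θ) (locks M Φ)) (b : M.Cell (locks M Φ) (locks M Ψ))
    {j : M.Mode} (Λ : LockTele M k j) :
    plusCell M (M.vcomp a b) Λ = M.vcomp (plusCell M a Λ) (plusCell M b Λ) := by
  have hc : M.cid (locks M Λ) = M.vcomp (M.cid (locks M Λ)) (M.cid (locks M Λ)) :=
    (M.cid_vcomp _).symm
  have h1 : M.hcomp (M.vcomp a b) (M.cid (locks M Λ)) =
      M.vcomp (M.hcomp a (M.cid (locks M Λ))) (M.hcomp b (M.cid (locks M Λ))) := by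
    rw [congrArg (M.hcomp (M.vcomp a b)) hc, M.interchange]
  refine eq_of_heq (((castCell_heq M _ _ _).trans (heq_of_eq h1)).trans ?_)
  exact vcomp_congr M (locks_append M Λ Θ).symm (locks_append M Λ Φ).symm
    (locks_append M Λ Ψ).symm (castCell_heq M _ _ _).symm (castCell_heq M _ _ _).symm

theorem keyCell_vcomp {n m : M.Mode} {Θ Φ Ψ : LockTele M n m}
    (a : M.Cell (locks M Θ) (locks M Φ)) (b : M.Cell (locks M Φ) (locks M Ψ))
    {l : M.Mode} (Λ : LockTele M l n) :
    keyCell M (M.vcomp a b) Λ = M.vcomp (keyCell M a Λ) (keyCell M b Λ) := by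
  have hc : M.cid (locks M Λ) = M.vcomp (M.cid (locks M Λ)) (M.cid (locks M Λ)) :=
    (M.cid_vcomp _).symm
  have h1 : M.hcomp (M.cid (locks M Λ)) (M.vcomp a b) =
      M.vcomp (M.hcomp (M.cid (locks M Λ)) a) (M.hcomp (M.cid (locks M Λ)) b) := by
    rw [show M.hcomp (M.cid (locks M Λ)) (M.vcomp a b) =
        M.hcomp (M.vcomp (M.cid (locks M Λ)) (M.cid (locks M Λ))) (M.vcomp a b) by rw [← hc],
      M.interchange]
  refine eq_of_heq (((castCell_heq M _ _ _).trans (heq_of_eq h1)).trans ?_)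
  exact vcomp_congr M (locks_append M Θ Λ).symm (locks_append M Φ Λ).symm
    (locks_append M Ψ Λ).symm (castCell_heq M _ _ _).symm (castCell_heq M _ _ _).symm

theorem keyCell_appLT {n m : M.Mode} {Θ Ψ : LockTele M n m}
    (α : M.Cell (locks M Θ) (locks M Ψ)) {l i : M.Mode}
    (Ξ : LockTele M l n) (Ξ' : LockTele M i l) :
    HEq (keyCell M (keyCell M α Ξ) Ξ') (keyCell M α (appLT M Ξ Ξ')) := by
  have s1 : HEq (keyCell M (keyCell M α Ξ) Ξ')
      (M.hcomp (M.cid (locks M Ξ')) (M.hcomp (M.cid (locks M Ξ)) α)) :=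
    (castCell_heq M _ _ _).trans (hcomp_congr M rfl rfl
      (locks_append M Θ Ξ) (locks_append M Ψ Ξ) (HEq.refl _) (castCell_heq M _ _ _))
  have s2 : HEq (M.hcomp (M.cid (locks M Ξ')) (M.hcomp (M.cid (locks M Ξ)) α))
      (M.hcomp (M.hcomp (M.cid (locks M Ξ')) (M.cid (locks M Ξ))) α) :=
    (M.hcomp_assoc (M.cid (locks M Ξ')) (M.cid (locks M Ξ)) α).symm
  have s3 : HEq (M.hcomp (M.hcomp (M.cid (locks M Ξ')) (M.cid (locks M Ξ))) α)
      (M.hcomp (M.cid (locks M (appLT M Ξ Ξ'))) α) := by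
    refine hcomp_congr M (locks_append M Ξ Ξ').symm (locks_append M Ξ Ξ').symm rfl rfl
      ?_ (HEq.refl α)
    rw [M.hcomp_cid]; exact cid_congr M (locks_append M Ξ Ξ').symm
  exact ((s1.trans s2).trans s3).trans (castCell_heq M _ _ _).symm

section CastVar
variable {M}

theorem cast_inr {l k i : M.Mode} {Γ : SCtx M l} {μ : M.Hom k l}
    {A B : LockTele M i l} (e : A = B) (w : VarIn M Γ A) :
    cast (congrArg (VarIn M (SCtx.ext Γ μ)) e) (Sum.inr w) =
      Sum.inr (cast (congrArg (VarIn M Γ) e) w) := by cases e; rfl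

theorem cast_inl {l k i : M.Mode} {Γ : SCtx M l} {μ : M.Hom k l}
    {A B : LockTele M i l} (e : A = B) (h : k = i) (β : M.Cell (h ▸ μ) (locks M A)) :
    cast (congrArg (VarIn M (SCtx.ext Γ μ)) e) (Sum.inl ⟨h, β⟩) =
      Sum.inl ⟨h, castCell M rfl (congrArg (locks M) e) β⟩ := by cases e; rfl

theorem inr_heq {l k i : M.Mode} {Γ : SCtx M l} {μ : M.Hom k l}
    {A B : LockTele M i l} (e : A = B) {w : VarIn M Γ A} {w' : VarIn M Γ B}
    (hw : HEq w w') :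
    HEq (Sum.inr w : VarIn M (SCtx.ext Γ μ) A) (Sum.inr w' : VarIn M (SCtx.ext Γ μ) B) := by
  cases e; cases hw; rfl

theorem inl_heq {l k i : M.Mode} {Γ : SCtx M l} {μ : M.Hom k l}
    {A B : LockTele M i l} (e : A = B) (h : k = i)
    {β : M.Cell (h ▸ μ) (locks M A)} {β' : M.Cell (h ▸ μ) (locks M B)}
    (hβ : HEq β β') :
    HEq (Sum.inl ⟨h, β⟩ : VarIn M (SCtx.ext Γ μ) A)
      (Sum.inl ⟨h, β'⟩ : VarIn M (SCtx.ext Γ μ) B) := by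
  cases e; cases hβ; rfl

end CastVar

theorem transf_congr {n k : M.Mode} {Θ Θ' Ψ Ψ' : LockTele M n k}
    (hΘ : Θ = Θ') (hΨ : Ψ = Ψ')
    {γ : M.Cell (locks M Θ) (locks M Ψ)} {γ' : M.Cell (locks M Θ') (locks M Ψ')}
    (hγ : HEq γ γ') {l : M.Mode} (Γ : SCtx M l) (Λ : LockTele M k l)
    {v : VarIn M Γ (appLT M Λ Θ)} {v' : VarIn M Γ (appLT M Λ Θ')} (hv : HEq v v') :
    HEq (transf M γ Γ Λ v) (transf M γ' Γ Λ v') := by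
  subst hΘ; subst hΨ; cases hγ; cases hv; rfl

theorem transf_comp {n k : M.Mode} {Θ Φ Ψ : LockTele M n k}
    (a : M.Cell (locks M Θ) (locks M Φ)) (b : M.Cell (locks M Φ) (locks M Ψ)) :
    ∀ {l : M.Mode} (Γ : SCtx M l) (Λ : LockTele M k l) (v : VarIn M Γ (appLT M Λ Θ)),
      transf M (M.vcomp a b) Γ Λ v = transf M b Γ Λ (transf M a Γ Λ v)
  | _, .empty, _, v => v.elim
  | _, .lock Γ ρ, Λ, v => transf_comp a b Γ (LockTele.cons ρ Λ) v
  | _, .ext Γ μ, Λ, v => by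
      rcases v with ⟨h, β⟩ | w
      · show (Sum.inl ⟨h, M.vcomp β (plusCell M (M.vcomp a b) Λ)⟩ :
            VarIn M (SCtx.ext Γ μ) (appLT M Λ Ψ)) =
          Sum.inl ⟨h, M.vcomp (M.vcomp β (plusCell M a Λ)) (plusCell M b Λ)⟩
        rw [plusCell_vcomp, M.vcomp_assoc]
      · exact congrArg Sum.inr (transf_comp a b Γ Λ w)

theorem transf_appL {n k : M.Mode} {Θ Ψ : LockTele M n k}
    (γ : M.Cell (locks M Θ) (locks M Ψ)) :
    ∀ {p : M.Mode} (Γ₀ : SCtx M p) {l : M.Mode} (T : LockTele M l p)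
      (Λ : LockTele M k l) (v : VarIn M (appL M Γ₀ T) (appLT M Λ Θ))
      (v' : VarIn M Γ₀ (appLT M (appLT M T Λ) Θ)), HEq v v' →
      HEq (transf M γ (appL M Γ₀ T) Λ v) (transf M γ Γ₀ (appLT M T Λ) v')
  | _, Γ₀, _, .nil, Λ, v, v', hv => by cases hv; rfl
  | _, Γ₀, _, .cons ρ T, Λ, v, v', hv => transf_appL γ (SCtx.lock Γ₀ ρ) T Λ v v' hv

theorem transf_absorb {n k j : M.Mode} {Θ Ψ : LockTele M n k}
    (γ : M.Cell (locks M Θ) (locks M Ψ)) (Λ' : LockTele M k j) :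
    ∀ {l : M.Mode} (Γ : SCtx M l) (Λ : LockTele M j l)
      (v : VarIn M Γ (appLT M (appLT M Λ Λ') Θ))
      (v' : VarIn M Γ (appLT M Λ (appLT M Λ' Θ))), HEq v v' →
      HEq (transf M γ Γ (appLT M Λ Λ') v) (transf M (plusCell M γ Λ') Γ Λ v')
  | _, .empty, Λ, v, v', hv => v.elim
  | _, .lock Γ ρ, Λ, v, v', hv => transf_absorb γ Λ' Γ (LockTele.cons ρ Λ) v v' hv
  | _, .ext Γ μ, Λ, v, v', hv => by
      have e1 := appLT_assoc M Λ Λ' Θ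
      have e2 := appLT_assoc M Λ Λ' Ψ
      rcases v with ⟨h, β⟩ | w
      · have hv' : v' = Sum.inl ⟨h, castCell M rfl (congrArg (locks M) e1) β⟩ := by
          rw [← cast_inl e1 h β]
          exact eq_of_heq (hv.symm.trans (cast_heq _ _).symm)
        subst hv'
        show HEq (Sum.inl ⟨h, M.vcomp β (plusCell M γ (appLT M Λ Λ'))⟩ :
            VarIn M (SCtx.ext Γ μ) (appLT M (appLT M Λ Λ') Ψ)) _
        refine inl_heq e2 h ?_
        exact vcomp_congr M rfl (congrArg (locks M) e1) (congrArg (locks M) e2)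
          (castCell_heq M _ _ _).symm (plusCell_plusCell M γ Λ' Λ).symm
      · have hv' : v' = Sum.inr (cast (congrArg (VarIn M Γ) e1) w) := by
          rw [← cast_inr e1 w]
          exact eq_of_heq (hv.symm.trans (cast_heq _ _).symm)
        subst hv'
        show HEq (Sum.inr (transf M γ Γ (appLT M Λ Λ') w) :
            VarIn M (SCtx.ext Γ μ) (appLT M (appLT M Λ Λ') Ψ)) _
        exact inr_heq e2 (transf_absorb γ Λ' Γ Λ w _ (cast_heq _ _).symm)



theorem arenVar_liftA_vz {m k : M.Mode} {Γ' Δ' : SCtx M m} (r : ARen M Γ' Δ') (μ : M.Hom k m)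
    {l : M.Mode} (Ξ : LockTele M l m) (h : k = l) (β : M.Cell (h ▸ μ) (locks M Ξ)) :
    arenVar M (liftA M r μ) Ξ (Sum.inl ⟨h, β⟩) = Sum.inl ⟨h, β⟩ := by
  cases h
  show (Sum.inl ⟨rfl, M.vcomp (castCell M rfl (locks_cons_nil M μ).symm (M.cid μ))
      (plusCell M (castCell M (locks_cons_nil M μ).symm rfl β) LockTele.nil)⟩ :
    VarIn M (SCtx.ext Γ' μ) Ξ) = Sum.inl ⟨rfl, β⟩
  rw [plusCell_nil]
  have : M.vcomp (castCell M rfl (locks_cons_nil M μ).symm (M.cid μ))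
      (castCell M (locks_cons_nil M μ).symm rfl β) = M.vcomp (M.cid μ) β :=
    eq_of_heq (vcomp_congr M rfl (locks_cons_nil M μ) rfl
      ((castCell_heq M _ _ _).trans (HEq.refl _)) (castCell_heq M _ _ _))
  rw [this, M.cid_vcomp]

theorem asubVar_liftS_vz {m k : M.Mode} {Γ' Δ' : SCtx M m} (s : ASub M Γ' Δ') (μ : M.Hom k m)
    (Ξ : LockTele M k m) (β : M.Cell μ (locks M Ξ)) :
    asubVar M (liftS M s μ) Ξ (Sum.inl ⟨rfl, β⟩) =
      arenExpr M (Expr.var (vzeroLift M μ))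
        (ARen.key (SCtx.ext Γ' μ) (LockTele.cons μ LockTele.nil) Ξ
          (castCell M (locks_cons_nil M μ).symm rfl β)) := rfl

theorem arenVar_lockTeleA {m' : M.Mode} :
    ∀ {k : M.Mode} (Θ : LockTele M k m') {Γ' Δ' : SCtx M m'} (r : ARen M Γ' Δ')
      {l : M.Mode} (Ξ : LockTele M l k)
      (v : VarIn M (appL M Δ' Θ) Ξ) (v' : VarIn M Δ' (appLT M Θ Ξ)), HEq v v' →
      HEq (arenVar M (lockTeleA M r Θ) Ξ v) (arenVar M r (appLT M Θ Ξ) v')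
  | _, .nil, _, _, r, _, Ξ, v, v', hv => by cases hv; simp only [lockTeleA]; exact HEq.rfl
  | _, .cons ρ Θ, _, _, r, _, Ξ, v, v', hv => by
      simp only [lockTeleA]
      exact arenVar_lockTeleA Θ (ARen.lock r ρ) Ξ v v' hv

theorem asubVar_lockTeleS {m' : M.Mode} :
    ∀ {k : M.Mode} (Θ : LockTele M k m') {Γ' Δ' : SCtx M m'} (s : ASub M Γ' Δ')
      {l : M.Mode} (Ξ : LockTele M l k)
      (v : VarIn M (appL M Δ' Θ) Ξ) (v' : VarIn M Δ' (appLT M Θ Ξ)), HEq v v' →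
      HEq (asubVar M (lockTeleS M s Θ) Ξ v) (asubVar M s (appLT M Θ Ξ) v')
  | _, .nil, _, _, s, _, Ξ, v, v', hv => by cases hv; simp only [lockTeleS]; exact HEq.rfl
  | _, .cons ρ Θ, _, _, s, _, Ξ, v, v', hv => by
      simp only [lockTeleS]
      exact asubVar_lockTeleS Θ (ASub.lock s ρ) Ξ v v' hv

/-- Pointwise equality of atomic renamings. -/
def ERen {m : M.Mode} {Γ Δ : SCtx M m} (r r' : ARen M Γ Δ) : Prop :=
  ∀ {l : M.Mode} (Ξ : LockTele M l m) (v : VarIn M Δ Ξ),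
    arenVar M r Ξ v = arenVar M r' Ξ v

/-- Pointwise: composing two atomic renamings equals a third. -/
def ER2 {m : M.Mode} {A B C : SCtx M m} (r₁ : ARen M B A) (s₁ : ARen M C B)
    (r : ARen M C A) : Prop :=
  ∀ {l : M.Mode} (Ξ : LockTele M l m) (v : VarIn M A Ξ),
    arenVar M s₁ Ξ (arenVar M r₁ Ξ v) = arenVar M r Ξ v

/-- Pointwise exchange law for two pairs of atomic renamings. -/
def ER22 {m : M.Mode} {A B C D : SCtx M m} (r₁ : ARen M B A) (s₁ : ARen M C B)
    (s₂ : ARen M D A) (r₂ : ARen M C D) : Prop :=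
  ∀ {l : M.Mode} (Ξ : LockTele M l m) (v : VarIn M A Ξ),
    arenVar M s₁ Ξ (arenVar M r₁ Ξ v) = arenVar M r₂ Ξ (arenVar M s₂ Ξ v)

/-- Pointwise exchange law for a renaming followed by a substitution. -/
def EP {m : M.Mode} {A B C D : SCtx M m} (r₁ : ARen M B A) (s₁ : ASub M C B)
    (s₂ : ASub M D A) (r₂ : ARen M C D) : Prop :=
  ∀ {l : M.Mode} (Ξ : LockTele M l m) (v : VarIn M A Ξ),
    asubVar M s₁ Ξ (arenVar M r₁ Ξ v) =
      arenExpr M (asubVar M s₂ Ξ v) (lockTeleA M r₂ Ξ)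

section Closures
variable {M}

theorem ERen.lockc {m n : M.Mode} {Γ Δ : SCtx M n} {r r' : ARen M Γ Δ} (h : ERen M r r')
    (ρ : M.Hom m n) : ERen M (ARen.lock r ρ) (ARen.lock r' ρ) :=
  fun Ξ v => h (LockTele.cons ρ Ξ) v

theorem ERen.liftc {m k : M.Mode} {Γ Δ : SCtx M m} {r r' : ARen M Γ Δ} (h : ERen M r r')
    (μ : M.Hom k m) : ERen M (liftA M r μ) (liftA M r' μ) := by
  intro l Ξ v
  rcases v with ⟨hh, β⟩ | w
  · rw [arenVar_liftA_vz M r μ Ξ hh β, arenVar_liftA_vz M r' μ Ξ hh β]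
  · show Sum.inr (arenVar M r Ξ w) = Sum.inr (arenVar M r' Ξ w)
    rw [h Ξ w]

theorem ER2.lockc {m n : M.Mode} {A B C : SCtx M n} {r₁ : ARen M B A} {s₁ : ARen M C B}
    {r : ARen M C A} (h : ER2 M r₁ s₁ r) (ρ : M.Hom m n) :
    ER2 M (ARen.lock r₁ ρ) (ARen.lock s₁ ρ) (ARen.lock r ρ) :=
  fun Ξ v => h (LockTele.cons ρ Ξ) v

theorem ER2.liftc {m k : M.Mode} {A B C : SCtx M m} {r₁ : ARen M B A} {s₁ : ARen M C B}
    {r : ARen M C A} (h : ER2 M r₁ s₁ r) (μ : M.Hom k m) :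
    ER2 M (liftA M r₁ μ) (liftA M s₁ μ) (liftA M r μ) := by
  intro l Ξ v
  rcases v with ⟨hh, β⟩ | w
  · rw [arenVar_liftA_vz M r₁ μ Ξ hh β, arenVar_liftA_vz M s₁ μ Ξ hh β,
      arenVar_liftA_vz M r μ Ξ hh β]
  · show Sum.inr (arenVar M s₁ Ξ (arenVar M r₁ Ξ w)) = Sum.inr (arenVar M r Ξ w)
    rw [h Ξ w]

theorem ER22.lockc {m n : M.Mode} {A B C D : SCtx M n} {r₁ : ARen M B A} {s₁ : ARen M C B}
    {s₂ : ARen M D A} {r₂ : ARen M C D} (h : ER22 M r₁ s₁ s₂ r₂) (ρ : M.Hom m n) :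
    ER22 M (ARen.lock r₁ ρ) (ARen.lock s₁ ρ) (ARen.lock s₂ ρ) (ARen.lock r₂ ρ) :=
  fun Ξ v => h (LockTele.cons ρ Ξ) v

theorem ER22.liftc {m k : M.Mode} {A B C D : SCtx M m} {r₁ : ARen M B A} {s₁ : ARen M C B}
    {s₂ : ARen M D A} {r₂ : ARen M C D} (h : ER22 M r₁ s₁ s₂ r₂) (μ : M.Hom k m) :
    ER22 M (liftA M r₁ μ) (liftA M s₁ μ) (liftA M s₂ μ) (liftA M r₂ μ) := by
  intro l Ξ v
  rcases v with ⟨hh, β⟩ | w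
  · rw [arenVar_liftA_vz M r₁ μ Ξ hh β, arenVar_liftA_vz M s₁ μ Ξ hh β,
      arenVar_liftA_vz M s₂ μ Ξ hh β, arenVar_liftA_vz M r₂ μ Ξ hh β]
  · show Sum.inr (arenVar M s₁ Ξ (arenVar M r₁ Ξ w)) =
      Sum.inr (arenVar M r₂ Ξ (arenVar M s₂ Ξ w))
    rw [h Ξ w]

theorem ER22.lockTelec {m : M.Mode} {A B C D : SCtx M m} {r₁ : ARen M B A} {s₁ : ARen M C B}
    {s₂ : ARen M D A} {r₂ : ARen M C D} (h : ER22 M r₁ s₁ s₂ r₂) :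
    ∀ {n : M.Mode} (Ξ : LockTele M n m),
      ER22 M (lockTeleA M r₁ Ξ) (lockTeleA M s₁ Ξ) (lockTeleA M s₂ Ξ) (lockTeleA M r₂ Ξ)
  | _, .nil => by simp only [lockTeleA]; exact h
  | _, .cons ρ Ξ => by
      simp only [lockTeleA]
      exact ER22.lockTelec (h.lockc ρ) Ξ

end Closures


theorem lockTeleA_nil {m : M.Mode} {Γ Δ : SCtx M m} (r : ARen M Γ Δ) :
    lockTeleA M r LockTele.nil = r := by simp [lockTeleA]; rfl

theorem lockTeleA_cons {m n : M.Mode} {Γ Δ : SCtx M m} (r : ARen M Γ Δ) (ρ : M.Hom n m)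
    {k : M.Mode} (Θ : LockTele M k n) :
    lockTeleA M r (LockTele.cons ρ Θ) = lockTeleA M (ARen.lock r ρ) Θ := by simp [lockTeleA]; rfl

theorem lockTeleS_nil {m : M.Mode} {Γ Δ : SCtx M m} (s : ASub M Γ Δ) :
    lockTeleS M s LockTele.nil = s := by simp [lockTeleS]; rfl

theorem lockTeleS_cons {m n : M.Mode} {Γ Δ : SCtx M m} (s : ASub M Γ Δ) (ρ : M.Hom n m)
    {k : M.Mode} (Θ : LockTele M k n) :
    lockTeleS M s (LockTele.cons ρ Θ) = lockTeleS M (ASub.lock s ρ) Θ := by simp [lockTeleS]; rfl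

theorem arenVar_key {m n : M.Mode} (Γ₀ : SCtx M m) (Θ Ψ : LockTele M n m)
    (α : M.Cell (locks M Θ) (locks M Ψ)) {l : M.Mode} (Λ : LockTele M l n)
    (v : VarIn M (appL M Γ₀ Θ) Λ) :
    arenVar M (ARen.key Γ₀ Θ Ψ α) Λ v =
      cast (varIn_append M Λ Γ₀ Ψ).symm
        (transf M (keyCell M α Λ) Γ₀ LockTele.nil (cast (varIn_append M Λ Γ₀ Θ) v)) := rfl

theorem asubVar_key {m n : M.Mode} (Γ₀ : SCtx M m) (Θ Ψ : LockTele M n m)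
    (α : M.Cell (locks M Θ) (locks M Ψ)) {l : M.Mode} (Λ : LockTele M l n)
    (v : VarIn M (appL M Γ₀ Θ) Λ) :
    asubVar M (ASub.key Γ₀ Θ Ψ α) Λ v =
      varExpr M (cast (varIn_append M Λ Γ₀ Ψ).symm
        (transf M (keyCell M α Λ) Γ₀ LockTele.nil (cast (varIn_append M Λ Γ₀ Θ) v))) := rfl

theorem arenVar_congr {m : M.Mode} {Γ Δ : SCtx M m} (r : ARen M Γ Δ)
    {l : M.Mode} {Ξ Ξ' : LockTele M l m} (e : Ξ = Ξ')
    {v : VarIn M Δ Ξ} {v' : VarIn M Δ Ξ'} (hv : HEq v v') :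
    HEq (arenVar M r Ξ v) (arenVar M r Ξ' v') := by subst e; cases hv; rfl

theorem asubVar_congr {m : M.Mode} {Γ Δ : SCtx M m} (s : ASub M Γ Δ)
    {l : M.Mode} {Ξ Ξ' : LockTele M l m} (e : Ξ = Ξ')
    {v : VarIn M Δ Ξ} {v' : VarIn M Δ Ξ'} (hv : HEq v v') :
    HEq (asubVar M s Ξ v) (asubVar M s Ξ' v') := by subst e; cases hv; rfl

section ExprLemmas
variable {M}

theorem ERen.expr {m : M.Mode} : ∀ {A : SCtx M m} (t : Expr M A) {Γ : SCtx M m}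
    (r r' : ARen M Γ A), ERen M r r' → arenExpr M t r = arenExpr M t r'
  | _, .var v, _, r, r', h => congrArg Expr.var (h LockTele.nil v)
  | _, .bool, _, _, _, _ => rfl
  | _, .tt, _, _, _, _ => rfl
  | _, .ff, _, _, _, _ => rfl
  | _, .ifte A s t t', _, r, r', h => by
      show Expr.ifte _ _ _ _ = Expr.ifte _ _ _ _
      rw [ERen.expr A _ _ (ERen.liftc h _), ERen.expr s _ _ h, ERen.expr t _ _ h,
        ERen.expr t' _ _ h]
  | _, .arrow μ A B, _, r, r', h => by
      show Expr.arrow μ _ _ = Expr.arrow μ _ _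
      rw [ERen.expr A _ _ (ERen.lockc h μ), ERen.expr B _ _ (ERen.liftc h μ)]
  | _, .lam μ t, _, r, r', h => by
      show Expr.lam μ _ = Expr.lam μ _
      rw [ERen.expr t _ _ (ERen.liftc h μ)]
  | _, .app μ f t, _, r, r', h => by
      show Expr.app μ _ _ = Expr.app μ _ _
      rw [ERen.expr f _ _ h, ERen.expr t _ _ (ERen.lockc h μ)]
  | _, .modTy μ A, _, r, r', h => by
      show Expr.modTy μ _ = Expr.modTy μ _
      rw [ERen.expr A _ _ (ERen.lockc h μ)]
  | _, .modTm μ t, _, r, r', h => by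
      show Expr.modTm μ _ = Expr.modTm μ _
      rw [ERen.expr t _ _ (ERen.lockc h μ)]
  | _, .letmod μ ν A B t s, _, r, r', h => by
      show Expr.letmod μ ν _ _ _ _ = Expr.letmod μ ν _ _ _ _
      rw [ERen.expr A _ _ (ERen.lockc (ERen.lockc h ν) μ), ERen.expr B _ _ (ERen.liftc h ν),
        ERen.expr t _ _ (ERen.lockc h ν), ERen.expr s _ _ (ERen.liftc h (M.comp μ ν))]

theorem ER2.expr {m : M.Mode} : ∀ {A : SCtx M m} (t : Expr M A) {B C : SCtx M m}
    (r₁ : ARen M B A) (s₁ : ARen M C B) (r : ARen M C A), ER2 M r₁ s₁ r →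
    arenExpr M (arenExpr M t r₁) s₁ = arenExpr M t r
  | _, .var v, _, _, r₁, s₁, r, h => congrArg Expr.var (h LockTele.nil v)
  | _, .bool, _, _, _, _, _, _ => rfl
  | _, .tt, _, _, _, _, _, _ => rfl
  | _, .ff, _, _, _, _, _, _ => rfl
  | _, .ifte A s t t', _, _, r₁, s₁, r, h => by
      show Expr.ifte _ _ _ _ = Expr.ifte _ _ _ _
      rw [ER2.expr A _ _ _ (ER2.liftc h _), ER2.expr s _ _ _ h, ER2.expr t _ _ _ h,
        ER2.expr t' _ _ _ h]
  | _, .arrow μ A B, _, _, r₁, s₁, r, h => by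
      show Expr.arrow μ _ _ = Expr.arrow μ _ _
      rw [ER2.expr A _ _ _ (ER2.lockc h μ), ER2.expr B _ _ _ (ER2.liftc h μ)]
  | _, .lam μ t, _, _, r₁, s₁, r, h => by
      show Expr.lam μ _ = Expr.lam μ _
      rw [ER2.expr t _ _ _ (ER2.liftc h μ)]
  | _, .app μ f t, _, _, r₁, s₁, r, h => by
      show Expr.app μ _ _ = Expr.app μ _ _
      rw [ER2.expr f _ _ _ h, ER2.expr t _ _ _ (ER2.lockc h μ)]
  | _, .modTy μ A, _, _, r₁, s₁, r, h => by
      show Expr.modTy μ _ = Expr.modTy μ _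
      rw [ER2.expr A _ _ _ (ER2.lockc h μ)]
  | _, .modTm μ t, _, _, r₁, s₁, r, h => by
      show Expr.modTm μ _ = Expr.modTm μ _
      rw [ER2.expr t _ _ _ (ER2.lockc h μ)]
  | _, .letmod μ ν A B t s, _, _, r₁, s₁, r, h => by
      show Expr.letmod μ ν _ _ _ _ = Expr.letmod μ ν _ _ _ _
      rw [ER2.expr A _ _ _ (ER2.lockc (ER2.lockc h ν) μ), ER2.expr B _ _ _ (ER2.liftc h ν),
        ER2.expr t _ _ _ (ER2.lockc h ν), ER2.expr s _ _ _ (ER2.liftc h (M.comp μ ν))]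

theorem ER22.expr {m : M.Mode} : ∀ {A : SCtx M m} (t : Expr M A) {B C D : SCtx M m}
    (r₁ : ARen M B A) (s₁ : ARen M C B) (s₂ : ARen M D A) (r₂ : ARen M C D),
    ER22 M r₁ s₁ s₂ r₂ →
    arenExpr M (arenExpr M t r₁) s₁ = arenExpr M (arenExpr M t s₂) r₂
  | _, .var v, _, _, _, r₁, s₁, s₂, r₂, h => congrArg Expr.var (h LockTele.nil v)
  | _, .bool, _, _, _, _, _, _, _, _ => rfl
  | _, .tt, _, _, _, _, _, _, _, _ => rfl
  | _, .ff, _, _, _, _, _, _, _, _ => rfl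
  | _, .ifte A s t t', _, _, _, r₁, s₁, s₂, r₂, h => by
      show Expr.ifte _ _ _ _ = Expr.ifte _ _ _ _
      rw [ER22.expr A _ _ _ _ (ER22.liftc h _), ER22.expr s _ _ _ _ h, ER22.expr t _ _ _ _ h,
        ER22.expr t' _ _ _ _ h]
  | _, .arrow μ A B, _, _, _, r₁, s₁, s₂, r₂, h => by
      show Expr.arrow μ _ _ = Expr.arrow μ _ _
      rw [ER22.expr A _ _ _ _ (ER22.lockc h μ), ER22.expr B _ _ _ _ (ER22.liftc h μ)]
  | _, .lam μ t, _, _, _, r₁, s₁, s₂, r₂, h => by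
      show Expr.lam μ _ = Expr.lam μ _
      rw [ER22.expr t _ _ _ _ (ER22.liftc h μ)]
  | _, .app μ f t, _, _, _, r₁, s₁, s₂, r₂, h => by
      show Expr.app μ _ _ = Expr.app μ _ _
      rw [ER22.expr f _ _ _ _ h, ER22.expr t _ _ _ _ (ER22.lockc h μ)]
  | _, .modTy μ A, _, _, _, r₁, s₁, s₂, r₂, h => by
      show Expr.modTy μ _ = Expr.modTy μ _
      rw [ER22.expr A _ _ _ _ (ER22.lockc h μ)]
  | _, .modTm μ t, _, _, _, r₁, s₁, s₂, r₂, h => by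
      show Expr.modTm μ _ = Expr.modTm μ _
      rw [ER22.expr t _ _ _ _ (ER22.lockc h μ)]
  | _, .letmod μ ν A B t s, _, _, _, r₁, s₁, s₂, r₂, h => by
      show Expr.letmod μ ν _ _ _ _ = Expr.letmod μ ν _ _ _ _
      rw [ER22.expr A _ _ _ _ (ER22.lockc (ER22.lockc h ν) μ), ER22.expr B _ _ _ _ (ER22.liftc h ν),
        ER22.expr t _ _ _ _ (ER22.lockc h ν), ER22.expr s _ _ _ _ (ER22.liftc h (M.comp μ ν))]

end ExprLemmas

/-- π exchanges with any renaming, pointwise. -/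
theorem er22_pi {m k : M.Mode} {Γ Δ : SCtx M m} (r : ARen M Γ Δ) (μ : M.Hom k m) :
    ER22 M r (piA M μ) (piA M μ) (liftA M r μ) := fun _ _ => rfl

/-- π exchanges with any renaming, under a lock telescope, at expression level. -/
theorem w_exch {m k : M.Mode} {Γ Δ : SCtx M m} (r : ARen M Γ Δ) (μ : M.Hom k m)
    {n : M.Mode} (Ξ : LockTele M n m) (e : Expr M (appL M Δ Ξ)) :
    arenExpr M (arenExpr M e (lockTeleA M r Ξ)) (lockTeleA M (piA M μ) Ξ) =
      arenExpr M (arenExpr M e (lockTeleA M (piA M μ) Ξ)) (lockTeleA M (liftA M r μ) Ξ) :=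
  ER22.expr e _ _ _ _ (ER22.lockTelec (er22_pi M r μ) Ξ)

section EPClosures
variable {M}

theorem EP.lockc {m n : M.Mode} {A B C D : SCtx M n} {r₁ : ARen M B A} {s₁ : ASub M C B}
    {s₂ : ASub M D A} {r₂ : ARen M C D} (h : EP M r₁ s₁ s₂ r₂) (ρ : M.Hom m n) :
    EP M (ARen.lock r₁ ρ) (ASub.lock s₁ ρ) (ASub.lock s₂ ρ) (ARen.lock r₂ ρ) := by
  intro l Ξ v
  have h2 := h (LockTele.cons ρ Ξ) v
  rw [lockTeleA_cons] at h2
  exact h2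

theorem EP.liftc {m k : M.Mode} {A B C D : SCtx M m} {r₁ : ARen M B A} {s₁ : ASub M C B}
    {s₂ : ASub M D A} {r₂ : ARen M C D} (h : EP M r₁ s₁ s₂ r₂) (μ : M.Hom k m) :
    EP M (liftA M r₁ μ) (liftS M s₁ μ) (liftS M s₂ μ) (liftA M r₂ μ) := by
  intro l Ξ v
  rcases v with ⟨hh, β⟩ | w
  · cases hh
    rw [arenVar_liftA_vz M r₁ μ Ξ rfl β, asubVar_liftS_vz M s₁ μ Ξ β,
      asubVar_liftS_vz M s₂ μ Ξ β]
    show Expr.var _ = Expr.var _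
    apply congrArg
    erw [arenVar_key, arenVar_key]
    have hcast : ∀ (E : SCtx M m),
        cast (varIn_append M LockTele.nil (SCtx.ext E μ) (LockTele.cons μ LockTele.nil))
          (vzeroLift M μ) = vzeroLift M μ := fun E => eq_of_heq (cast_heq _ _)
    erw [hcast C, hcast D]
    apply eq_of_heq
    refine (cast_heq _ _).trans ?_
    refine HEq.symm ?_
    refine (arenVar_lockTeleA M Ξ (liftA M r₂ μ) LockTele.nil _
        (Sum.inl ⟨rfl, M.vcomp (castCell M rfl (locks_cons_nil M μ).symm (M.cid μ))
          (plusCell M (keyCell M (castCell M (locks_cons_nil M μ).symm rfl β)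
            LockTele.nil) LockTele.nil)⟩) ((cast_heq _ _).trans HEq.rfl)).trans ?_
    rw [arenVar_liftA_vz M r₂ μ (appLT M Ξ LockTele.nil) rfl _]
    exact HEq.rfl
  · show arenExpr M (asubVar M s₁ Ξ (arenVar M r₁ Ξ w)) (lockTeleA M (piA M μ) Ξ) =
      arenExpr M (arenExpr M (asubVar M s₂ Ξ w) (lockTeleA M (piA M μ) Ξ))
        (lockTeleA M (liftA M r₂ μ) Ξ)
    rw [h Ξ w, w_exch M r₂ μ Ξ]

end EPClosures

section EPExpr
variable {M}

theorem EP.expr {m : M.Mode} : ∀ {A : SCtx M m} (t : Expr M A) {B C D : SCtx M m}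
    (r₁ : ARen M B A) (s₁ : ASub M C B) (s₂ : ASub M D A) (r₂ : ARen M C D),
    EP M r₁ s₁ s₂ r₂ →
    asubExpr M (arenExpr M t r₁) s₁ = arenExpr M (asubExpr M t s₂) r₂
  | _, .var v, _, _, _, r₁, s₁, s₂, r₂, h => by
      have h2 := h LockTele.nil v
      rw [lockTeleA_nil] at h2
      exact h2
  | _, .bool, _, _, _, _, _, _, _, _ => rfl
  | _, .tt, _, _, _, _, _, _, _, _ => rfl
  | _, .ff, _, _, _, _, _, _, _, _ => rfl
  | _, .ifte A s t t', _, _, _, r₁, s₁, s₂, r₂, h => by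
      show Expr.ifte _ _ _ _ = Expr.ifte _ _ _ _
      rw [EP.expr A _ _ _ _ (EP.liftc h _), EP.expr s _ _ _ _ h, EP.expr t _ _ _ _ h,
        EP.expr t' _ _ _ _ h]
  | _, .arrow μ A B, _, _, _, r₁, s₁, s₂, r₂, h => by
      show Expr.arrow μ _ _ = Expr.arrow μ _ _
      rw [EP.expr A _ _ _ _ (EP.lockc h μ), EP.expr B _ _ _ _ (EP.liftc h μ)]
  | _, .lam μ t, _, _, _, r₁, s₁, s₂, r₂, h => by
      show Expr.lam μ _ = Expr.lam μ _
      rw [EP.expr t _ _ _ _ (EP.liftc h μ)]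
  | _, .app μ f t, _, _, _, r₁, s₁, s₂, r₂, h => by
      show Expr.app μ _ _ = Expr.app μ _ _
      rw [EP.expr f _ _ _ _ h, EP.expr t _ _ _ _ (EP.lockc h μ)]
  | _, .modTy μ A, _, _, _, r₁, s₁, s₂, r₂, h => by
      show Expr.modTy μ _ = Expr.modTy μ _
      rw [EP.expr A _ _ _ _ (EP.lockc h μ)]
  | _, .modTm μ t, _, _, _, r₁, s₁, s₂, r₂, h => by
      show Expr.modTm μ _ = Expr.modTm μ _
      rw [EP.expr t _ _ _ _ (EP.lockc h μ)]
  | _, .letmod μ ν A B t s, _, _, _, r₁, s₁, s₂, r₂, h => by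
      show Expr.letmod μ ν _ _ _ _ = Expr.letmod μ ν _ _ _ _
      rw [EP.expr A _ _ _ _ (EP.lockc (EP.lockc h ν) μ), EP.expr B _ _ _ _ (EP.liftc h ν),
        EP.expr t _ _ _ _ (EP.lockc h ν), EP.expr s _ _ _ _ (EP.liftc h (M.comp μ ν))]

end EPExpr

theorem transf_congr2 {n k : M.Mode} {Θ Ψ : LockTele M n k}
    (γ : M.Cell (locks M Θ) (locks M Ψ)) {l : M.Mode} (Γ : SCtx M l)
    {Λ Λ' : LockTele M k l} (e : Λ = Λ')
    {v : VarIn M Γ (appLT M Λ Θ)} {v' : VarIn M Γ (appLT M Λ' Θ)} (hv : HEq v v') :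
    HEq (transf M γ Γ Λ v) (transf M γ Γ Λ' v') := by subst e; cases hv; rfl

theorem castCell_vcomp {m n : M.Mode} {μ μ' ν ρ : M.Hom m n} (h1 : μ = μ')
    (x : M.Cell μ ν) (y : M.Cell ν ρ) :
    castCell M h1 rfl (M.vcomp x y) = M.vcomp (castCell M h1 rfl x) y := by cases h1; rfl

theorem plusCell_keyCell {n m : M.Mode} {A B : LockTele M n m}
    (c : M.Cell (locks M A) (locks M B)) {l j : M.Mode}
    (Ξ : LockTele M l n) (Λ : LockTele M m j) :
    HEq (plusCell M (keyCell M c Ξ) Λ) (keyCell M (plusCell M c Λ) Ξ) := by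
  have s1 : HEq (plusCell M (keyCell M c Ξ) Λ)
      (M.hcomp (M.hcomp (M.cid (locks M Ξ)) c) (M.cid (locks M Λ))) :=
    (castCell_heq M _ _ _).trans (hcomp_congr M (locks_append M A Ξ) (locks_append M B Ξ)
      rfl rfl (castCell_heq M _ _ _) (HEq.refl _))
  have s2 : HEq (M.hcomp (M.hcomp (M.cid (locks M Ξ)) c) (M.cid (locks M Λ)))
      (M.hcomp (M.cid (locks M Ξ)) (M.hcomp c (M.cid (locks M Λ)))) :=
    M.hcomp_assoc (M.cid (locks M Ξ)) c (M.cid (locks M Λ))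
  have s3 : HEq (M.hcomp (M.cid (locks M Ξ)) (M.hcomp c (M.cid (locks M Λ))))
      (keyCell M (plusCell M c Λ) Ξ) := by
    refine HEq.trans ?_ (castCell_heq M _ _ _).symm
    exact hcomp_congr M rfl rfl (locks_append M Λ A).symm (locks_append M Λ B).symm
      (HEq.refl _) (castCell_heq M _ _ _).symm
  exact (s1.trans s2).trans s3

theorem key_plus_exch {n m l : M.Mode} {Λ Θ : LockTele M l n}
    (γ : M.Cell (locks M Λ) (locks M Θ)) {Θ₀ Ψ₀ : LockTele M n m}
    (α : M.Cell (locks M Θ₀) (locks M Ψ₀)) :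
    M.vcomp (plusCell M γ Θ₀) (keyCell M α Θ) =
      M.vcomp (keyCell M α Λ) (plusCell M γ Ψ₀) := by
  have h1 : M.vcomp (M.hcomp γ (M.cid (locks M Θ₀))) (M.hcomp (M.cid (locks M Θ)) α) =
      M.hcomp γ α := by rw [← M.interchange, M.vcomp_cid, M.cid_vcomp]
  have h2 : M.vcomp (M.hcomp (M.cid (locks M Λ)) α) (M.hcomp γ (M.cid (locks M Ψ₀))) =
      M.hcomp γ α := by rw [← M.interchange, M.vcomp_cid, M.cid_vcomp]
  have e1 : HEq (M.vcomp (plusCell M γ Θ₀) (keyCell M α Θ))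
      (M.vcomp (M.hcomp γ (M.cid (locks M Θ₀))) (M.hcomp (M.cid (locks M Θ)) α)) :=
    vcomp_congr M (locks_append M Θ₀ Λ) (locks_append M Θ₀ Θ) (locks_append M Ψ₀ Θ)
      (castCell_heq M _ _ _) (castCell_heq M _ _ _)
  have e2 : HEq (M.vcomp (keyCell M α Λ) (plusCell M γ Ψ₀))
      (M.vcomp (M.hcomp (M.cid (locks M Λ)) α) (M.hcomp γ (M.cid (locks M Ψ₀)))) :=
    vcomp_congr M (locks_append M Θ₀ Λ) (locks_append M Ψ₀ Λ) (locks_append M Ψ₀ Θ)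
      (castCell_heq M _ _ _) (castCell_heq M _ _ _)
  exact eq_of_heq (((e1.trans (heq_of_eq h1)).trans (heq_of_eq h2).symm).trans e2.symm)

/-- Heterogeneous pointwise equality of atomic renamings. -/
def ERenH {m : M.Mode} {Γ₁ Δ₁ Γ₂ Δ₂ : SCtx M m} (r : ARen M Γ₁ Δ₁) (r' : ARen M Γ₂ Δ₂) :
    Prop :=
  ∀ {l : M.Mode} (Ξ : LockTele M l m) (v : VarIn M Δ₁ Ξ) (v' : VarIn M Δ₂ Ξ),
    HEq v v' → HEq (arenVar M r Ξ v) (arenVar M r' Ξ v')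

theorem ERenH.expr {m : M.Mode} {Γ₁ Δ₁ Γ₂ Δ₂ : SCtx M m} {r : ARen M Γ₁ Δ₁}
    {r' : ARen M Γ₂ Δ₂} (eΓ : Γ₁ = Γ₂) (eΔ : Δ₁ = Δ₂) (h : ERenH M r r')
    (t : Expr M Δ₁) (t' : Expr M Δ₂) (ht : HEq t t') :
    HEq (arenExpr M t r) (arenExpr M t' r') := by
  subst eΓ; subst eΔ; cases ht
  exact heq_of_eq (ERen.expr t r r' (fun Ξ v => eq_of_heq (h Ξ v v HEq.rfl)))

theorem transf_appL_absorb {n k : M.Mode} {Θ Ψ : LockTele M n k}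
    (γ : M.Cell (locks M Θ) (locks M Ψ)) {p : M.Mode} (Γ₀ : SCtx M p)
    (T : LockTele M k p) (v : VarIn M (appL M Γ₀ T) Θ)
    (v' : VarIn M Γ₀ (appLT M T Θ)) (hv : HEq v v') :
    HEq (transf M γ (appL M Γ₀ T) LockTele.nil v)
      (transf M (plusCell M γ T) Γ₀ LockTele.nil v') := by
  have e : appLT M (appLT M T LockTele.nil) Θ = appLT M T Θ :=
    congrArg (fun X => appLT M X Θ) (appLT_nil M T)
  have ce : VarIn M Γ₀ (appLT M (appLT M T LockTele.nil) Θ) = VarIn M Γ₀ (appLT M T Θ) :=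
    congrArg (VarIn M Γ₀) e
  refine ((transf_appL M γ Γ₀ T LockTele.nil v (cast ce.symm v')
    (hv.trans (cast_heq ce.symm v').symm)).trans
    (transf_congr2 M γ Γ₀ (appLT_nil M T) (cast_heq ce.symm v'))).trans ?_
  exact transf_absorb M γ T Γ₀ LockTele.nil v' v' HEq.rfl

theorem key_pi {m k n : M.Mode} (Γ : SCtx M m) (μ : M.Hom k m) (A B : LockTele M n m)
    (c : M.Cell (locks M A) (locks M B)) :
    ER22 M (ARen.key Γ A B c) (lockTeleA M (piA M μ) B) (lockTeleA M (piA M μ) A)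
      (ARen.key (SCtx.ext Γ μ) A B c) := by
  intro l Ξ v
  have hz : cast (varIn_append M Ξ (SCtx.ext Γ μ) A)
        (arenVar M (lockTeleA M (piA M μ) A) Ξ v)
      = (Sum.inr (cast (varIn_append M Ξ Γ A) v) :
          VarIn M (SCtx.ext Γ μ) (appLT M A Ξ)) := by
    apply eq_of_heq
    refine (cast_heq _ _).trans ?_
    refine (arenVar_lockTeleA M A (piA M μ) Ξ v (cast (varIn_append M Ξ Γ A) v)
      (cast_heq _ _).symm).trans ?_
    exact HEq.rfl
  erw [arenVar_key M Γ A B c Ξ v, arenVar_key M (SCtx.ext Γ μ) A B c Ξ, hz]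
  apply eq_of_heq
  refine (arenVar_lockTeleA M B (piA M μ) Ξ _
    (transf M (keyCell M c Ξ) Γ LockTele.nil (cast (varIn_append M Ξ Γ A) v))
    (cast_heq _ _)).trans ?_
  exact (cast_heq _ _).symm

theorem key_key {m n : M.Mode} (Γ : SCtx M m) (A B C : LockTele M n m)
    (a : M.Cell (locks M A) (locks M B)) (b : M.Cell (locks M B) (locks M C)) :
    ER2 M (ARen.key Γ A B a) (ARen.key Γ B C b) (ARen.key Γ A C (M.vcomp a b)) := by
  intro l Ξ v
  rw [arenVar_key, arenVar_key, arenVar_key, keyCell_vcomp,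
    transf_comp M (keyCell M a Ξ) (keyCell M b Ξ) Γ LockTele.nil]
  exact congrArg (cast (varIn_append M Ξ Γ C).symm)
    (congrArg (transf M (keyCell M b Ξ) Γ LockTele.nil)
      (eq_of_heq ((cast_heq _ _).trans (cast_heq _ _))))

theorem key_fold {m n' n : M.Mode} (Γ : SCtx M m) (ρ : M.Hom n' m) (A B : LockTele M n n')
    (c : M.Cell (locks M A) (locks M B)) :
    ERen M (ARen.key (SCtx.lock Γ ρ) A B c)
      (ARen.key Γ (LockTele.cons ρ A) (LockTele.cons ρ B)
        (plusCell M c (LockTele.cons ρ LockTele.nil))) := by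
  intro l Ξ v
  erw [arenVar_key, arenVar_key]
  apply eq_of_heq
  refine (cast_heq _ _).trans (HEq.trans ?_ (cast_heq _ _).symm)
  refine HEq.trans (transf_absorb M (keyCell M c Ξ) (LockTele.cons ρ LockTele.nil) Γ
    LockTele.nil (cast (varIn_append M Ξ (SCtx.lock Γ ρ) A) v)
    (cast (varIn_append M Ξ Γ (LockTele.cons ρ A)) v)
    ((cast_heq _ _).trans (cast_heq _ _).symm)) ?_
  exact transf_congr M rfl rfl (plusCell_keyCell M c Ξ (LockTele.cons ρ LockTele.nil)) Γ LockTele.nil HEq.rfl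

theorem key_lockTele_fold {m n : M.Mode} (Γ : SCtx M m) (Λ Θ : LockTele M n m)
    (α : M.Cell (locks M Λ) (locks M Θ)) {j : M.Mode} (Ξ : LockTele M j n) :
    ERenH M (lockTeleA M (ARen.key Γ Λ Θ α) Ξ)
      (ARen.key Γ (appLT M Λ Ξ) (appLT M Θ Ξ) (keyCell M α Ξ)) := by
  intro l Ξ' v v' hv
  rw [arenVar_key]
  refine HEq.trans (arenVar_lockTeleA M Ξ (ARen.key Γ Λ Θ α) Ξ' v
    (cast (varIn_append M Ξ' (appL M Γ Λ) Ξ) v) (cast_heq _ _).symm) ?_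
  rw [arenVar_key]
  refine (cast_heq _ _).trans (HEq.trans ?_ (cast_heq _ _).symm)
  refine transf_congr M (appLT_assoc M Λ Ξ Ξ').symm (appLT_assoc M Θ Ξ Ξ').symm
    (keyCell_appLT M α Ξ Ξ').symm Γ LockTele.nil ?_
  exact (((cast_heq _ _).trans (cast_heq _ _)).trans hv).trans (cast_heq _ _).symm

theorem keyK {m : M.Mode} : ∀ {Γ Δ : SCtx M m} (σ : ASub M Γ Δ) {l : M.Mode}
    (Λ Θ : LockTele M l m) (γ : M.Cell (locks M Λ) (locks M Θ)) (v : VarIn M Δ Λ),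
    asubVar M σ Θ (transf M γ Δ LockTele.nil v) =
      arenExpr M (asubVar M σ Λ v) (ARen.key Γ Λ Θ γ)
  | _, _, .done, _, Λ, Θ, γ, v => PEmpty.elim v
  | _, Δ, .id, _, Λ, Θ, γ, v => by
      show Expr.var (toVarNil M (transf M γ Δ LockTele.nil v)) =
        Expr.var (arenVar M (ARen.key Δ Λ Θ γ) LockTele.nil (toVarNil M v))
      rw [arenVar_key]
      apply congrArg
      apply eq_of_heq
      refine (cast_heq _ _).trans (HEq.trans ?_ (cast_heq _ _).symm)
      refine transf_congr M (appLT_nil M Λ).symm (appLT_nil M Θ).symm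
        (keyCell_nil_heq M γ).symm Δ LockTele.nil ?_
      exact ((cast_heq _ _).trans (cast_heq _ _)).symm
  | _, _, @ASub.wk _ _ _ Γ₀ Δ₀ σ' ν, _, Λ, Θ, γ, v => by
      show arenExpr M (asubVar M σ' Θ (transf M γ _ LockTele.nil v))
          (lockTeleA M (piA M ν) Θ) =
        arenExpr M (arenExpr M (asubVar M σ' Λ v) (lockTeleA M (piA M ν) Λ))
          (ARen.key _ Λ Θ γ)
      rw [keyK σ' Λ Θ γ v]
      exact ER22.expr (asubVar M σ' Λ v) _ _ _ _ (key_pi M Γ₀ ν Λ Θ γ)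
  | _, _, @ASub.lock _ _ _ Γ₀ Δ₀ σ' ρ, _, Λ, Θ, γ, v => by
      show asubVar M σ' (LockTele.cons ρ Θ)
          (transf M γ Δ₀ (LockTele.cons ρ LockTele.nil) v) = _
      rw [show transf M γ Δ₀ (LockTele.cons ρ LockTele.nil) v =
          transf M (plusCell M γ (LockTele.cons ρ LockTele.nil)) Δ₀ LockTele.nil v from
        eq_of_heq (transf_absorb M γ (LockTele.cons ρ LockTele.nil) Δ₀ LockTele.nil v v
          HEq.rfl)]
      erw [keyK σ' (LockTele.cons ρ Λ) (LockTele.cons ρ Θ)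
        (plusCell M γ (LockTele.cons ρ LockTele.nil)) v]
      exact (ERen.expr (asubVar M σ' (LockTele.cons ρ Λ) v) _ _
        (key_fold M Γ₀ ρ Λ Θ γ)).symm
  | _, _, .key Γ₀ Θ₀ Ψ₀ α₀, _, Λ, Θ, γ, v => by
      erw [asubVar_key, asubVar_key]
      show Expr.var _ = Expr.var (arenVar M (ARen.key _ Λ Θ γ) LockTele.nil _)
      rw [arenVar_key]
      apply congrArg
      apply eq_of_heq
      have hin : cast (varIn_append M Θ Γ₀ Θ₀) (transf M γ (appL M Γ₀ Θ₀) LockTele.nil v) =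
          transf M (plusCell M γ Θ₀) Γ₀ LockTele.nil (cast (varIn_append M Λ Γ₀ Θ₀) v) :=
        eq_of_heq ((cast_heq _ _).trans (transf_appL_absorb M γ Γ₀ Θ₀ v
          (cast (varIn_append M Λ Γ₀ Θ₀) v) (cast_heq _ _).symm))
      have a1 : HEq (toVarNil M (cast (varIn_append M Θ Γ₀ Ψ₀).symm
          (transf M (keyCell M α₀ Θ) Γ₀ LockTele.nil
            (cast (varIn_append M Θ Γ₀ Θ₀) (transf M γ (appL M Γ₀ Θ₀) LockTele.nil v)))))
          (transf M (M.vcomp (plusCell M γ Θ₀) (keyCell M α₀ Θ)) Γ₀ LockTele.nil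
            (cast (varIn_append M Λ Γ₀ Θ₀) v)) := by
        erw [hin, ← transf_comp M (plusCell M γ Θ₀) (keyCell M α₀ Θ) Γ₀ LockTele.nil]
        exact (cast_heq _ _).trans (cast_heq _ _)
      have b1 : HEq (arenVar M (ARen.key (appL M Γ₀ Ψ₀) Λ Θ γ) LockTele.nil
          (toVarNil M (cast (varIn_append M Λ Γ₀ Ψ₀).symm
            (transf M (keyCell M α₀ Λ) Γ₀ LockTele.nil
              (cast (varIn_append M Λ Γ₀ Θ₀) v)))))
          (transf M (M.vcomp (keyCell M α₀ Λ) (plusCell M γ Ψ₀)) Γ₀ LockTele.nil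
            (cast (varIn_append M Λ Γ₀ Θ₀) v)) := by
        rw [arenVar_key, transf_comp M (keyCell M α₀ Λ) (plusCell M γ Ψ₀) Γ₀ LockTele.nil]
        refine (cast_heq _ _).trans ?_
        refine HEq.trans (transf_congr M (appLT_nil M Λ) (appLT_nil M Θ)
          (keyCell_nil_heq M γ) (appL M Γ₀ Ψ₀) LockTele.nil
          ((cast_heq _ _).trans (cast_heq _ _))) ?_
        exact transf_appL_absorb M γ Γ₀ Ψ₀ _ _ (cast_heq _ _)
      rw [key_plus_exch M γ α₀] at a1
      exact a1.trans b1.symm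
  | _, _, @ASub.ext _ _ _ Γ₀ Δ₀ σ' ν t, _, Λ, Θ, γ, v => by
      rcases v with ⟨hh, β⟩ | w
      · cases hh
        show arenExpr M t (ARen.key Γ₀ (LockTele.cons ν LockTele.nil) Θ
            (castCell M (locks_cons_nil M ν).symm rfl
              (M.vcomp β (plusCell M γ LockTele.nil)))) = _
        rw [plusCell_nil, castCell_vcomp M (locks_cons_nil M ν).symm β γ]
        exact (ER2.expr t _ _ _ (key_key M Γ₀ (LockTele.cons ν LockTele.nil) Λ Θ
          (castCell M (locks_cons_nil M ν).symm rfl β) γ)).symm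
      · exact keyK σ' Λ Θ γ w

theorem ep_key {m n : M.Mode} {Γ Δ : SCtx M m} (σ : ASub M Γ Δ) (Λ Θ : LockTele M n m)
    (α : M.Cell (locks M Λ) (locks M Θ)) :
    EP M (ARen.key Δ Λ Θ α) (lockTeleS M σ Θ) (lockTeleS M σ Λ) (ARen.key Γ Λ Θ α) := by
  intro l Ξ v
  apply eq_of_heq
  have harg : cast (varIn_append M Ξ Δ Θ) (arenVar M (ARen.key Δ Λ Θ α) Ξ v) =
      transf M (keyCell M α Ξ) Δ LockTele.nil (cast (varIn_append M Ξ Δ Λ) v) := by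
    rw [arenVar_key]
    exact eq_of_heq ((cast_heq _ _).trans (cast_heq _ _))
  have h1 := asubVar_lockTeleS M Θ σ Ξ (arenVar M (ARen.key Δ Λ Θ α) Ξ v)
    (cast (varIn_append M Ξ Δ Θ) (arenVar M (ARen.key Δ Λ Θ α) Ξ v)) (cast_heq _ _).symm
  rw [harg] at h1
  have hK := keyK M σ (appLT M Λ Ξ) (appLT M Θ Ξ) (keyCell M α Ξ)
    (cast (varIn_append M Ξ Δ Λ) v)
  have hR : HEq (arenExpr M (asubVar M (lockTeleS M σ Λ) Ξ v)
        (lockTeleA M (ARen.key Γ Λ Θ α) Ξ))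
      (arenExpr M (asubVar M σ (appLT M Λ Ξ) (cast (varIn_append M Ξ Δ Λ) v))
        (ARen.key Γ (appLT M Λ Ξ) (appLT M Θ Ξ) (keyCell M α Ξ))) :=
    ERenH.expr M (appL_append M Γ Θ Ξ) (appL_append M Γ Λ Ξ) (key_lockTele_fold M Γ Λ Θ α Ξ)
      _ _ (asubVar_lockTeleS M Λ σ Ξ v (cast (varIn_append M Ξ Δ Λ) v) (cast_heq _ _).symm)
  exact (h1.trans (heq_of_eq hK)).trans hR.symm

theorem lockTeleSub_id {m : M.Mode} {Γ : SCtx M m} :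
    ∀ {n : M.Mode} (Θ : LockTele M n m), lockTeleSub M (Sub.id (Γ := Γ)) Θ = Sub.id
  | _, .nil => by simp [lockTeleSub]; rfl
  | _, .cons ρ Θ => by
      simp only [lockTeleSub]
      rw [show lockSub M ρ (Sub.id (Γ := Γ)) = Sub.id from by simp [lockSub]]
      exact lockTeleSub_id Θ

theorem lockTeleSub_snoc {m : M.Mode} {Γ Δ E : SCtx M m} (σ : Sub M Δ E) (τ : ASub M Γ Δ) :
    ∀ {n : M.Mode} (Θ : LockTele M n m),
      lockTeleSub M (Sub.snoc σ τ) Θ = Sub.snoc (lockTeleSub M σ Θ) (lockTeleS M τ Θ)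
  | _, .nil => by simp [lockTeleSub, lockTeleS]; rfl
  | _, .cons ρ Θ => by
      simp only [lockTeleSub]
      rw [show lockSub M ρ (Sub.snoc σ τ) = Sub.snoc (lockSub M ρ σ) (ASub.lock τ ρ) from
        by simp [lockSub]]
      rw [lockTeleSub_snoc (lockSub M ρ σ) (ASub.lock τ ρ) Θ, lockTeleS_cons]
      rfl

end KeyNat


/-- Key renamings are natural with respect to SFMTT substitutions. -/
theorem key_natural (M : ModeTheory) {m n : M.Mode} {Γ Δ : SCtx M m}
    (Λ Θ : LockTele M n m) (α : M.Cell (locks M Λ) (locks M Θ))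
    (σ : Sub M Γ Δ) (t : Expr M (appL M Δ Λ)) :
    subExpr M (arenExpr M t (ARen.key Δ Λ Θ α)) (lockTeleSub M σ Θ) =
      arenExpr M (subExpr M t (lockTeleSub M σ Λ)) (ARen.key Γ Λ Θ α) := by
  induction σ with
  | id =>
      rw [KeyNat.lockTeleSub_id M Θ, KeyNat.lockTeleSub_id M Λ]
      simp only [subExpr]
  | snoc σ' τ ih =>
      rw [KeyNat.lockTeleSub_snoc M σ' τ Θ, KeyNat.lockTeleSub_snoc M σ' τ Λ]
      simp only [subExpr]
      rw [ih]
      exact KeyNat.EP.expr _ _ _ _ _ (KeyNat.ep_key M τ Λ Θ α)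

end MTT
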